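/- arXiv:2605.23742 — 5 statements merged into one kernel-verified Lean document; each statement's English description precedes it below -/
import Mathlib

section
/- For every integer m ≥ 4 and every tie-breaking rule, the probability under Impartial Culture with n voters and m candidates that Plurality with Runoff is coalitionally manipulable tends to 1 as n tends to infinity. -/
open Finset

/-- A ranking of `m` candidates, encoded as a permutation assigning each candidate its
position (position `0` is the most preferred); candidate `c` is ranked above `b` iff
`r c < r b`. The ranking `(1 ≻ 2 ≻ ⋯ ≻ m)` corresponds to the identity permutation. -/
abbrev Ranking (m : ℕ) := Equiv.Perm (Fin m)

/-- A profile: for each ranking, the number of voters having that ranking. -/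
abbrev Profile (m : ℕ) := Ranking m → ℕ

/-- Total number of voters of a profile. -/
def numVoters {m : ℕ} (π : Profile m) : ℕ := ∑ r, π r

/-- `score π c S` is `n_{c ⪰ S}`: the number of voters ranking `c` above every other
candidate of `S`. -/
def score {m : ℕ} (π : Profile m) (c : Fin m) (S : Finset (Fin m)) : ℕ :=
  ∑ r ∈ Finset.univ.filter (fun r : Ranking m => ∀ b ∈ S, b ≠ c → r c < r b), π r

/-- Coalitional manipulability of the voting rule `f` at the profile `π`: some other
profile `π'` with the same number of voters is such that every voter whose ballot
changed (i.e. every ranking cast by fewer voters in `π'`) ranks the new winner above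
the old one. -/
def IsCM {m : ℕ} (f : Profile m → Fin m) (π : Profile m) : Prop :=
  ∃ π' : Profile m, π' ≠ π ∧ numVoters π' = numVoters π ∧
    ∀ r : Ranking m, π' r < π r → r (f π') < r (f π)

/-- `c` is a Super Condorcet Winner: in every subset `S ∋ c` with at least two
candidates, the plurality score of `c` exceeds the average `n / |S|`. -/
def IsSCW {m : ℕ} (π : Profile m) (c : Fin m) : Prop :=
  ∀ S : Finset (Fin m), c ∈ S → 2 ≤ S.card →
    (numVoters π : ℝ) / (S.card : ℝ) < (score π c S : ℝ)

/-- A tie-breaking rule selects a member of every nonempty finite set of candidates. -/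
def IsTieBreak {m : ℕ} (tb : Finset (Fin m) → Fin m) : Prop :=
  ∀ S : Finset (Fin m), S.Nonempty → tb S ∈ S

/-- The IRV elimination process on the set `S` of remaining candidates: repeatedly
eliminate a candidate of minimal plurality score (ties broken by `tb`). -/
def irvAux {m : ℕ} (tb : Finset (Fin m) → Fin m) (π : Profile m) (S : Finset (Fin m)) :
    Fin m :=
  if S.card ≤ 1 then tb S
  else
    let e := tb (S.filter fun c => ∀ b ∈ S, score π c S ≤ score π b S)
    if he : e ∈ S then irvAux tb π (S.erase e) else tb S
termination_by S.card
decreasing_by exact Finset.card_erase_lt_of_mem he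

/-- The IRV winner of a profile, for tie-breaking rule `tb`. -/
def irv {m : ℕ} (tb : Finset (Fin m) → Fin m) (π : Profile m) : Fin m :=
  irvAux tb π Finset.univ

/-- Probability, under Impartial Culture with `n` voters and `m` candidates (each voter
draws a uniformly random ranking, independently), that the resulting profile satisfies
the event `E`. -/
noncomputable def icProb (m n : ℕ) (E : Profile m → Prop) : ℝ :=
  (Nat.card {v : Fin n → Ranking m //
      E fun r => (Finset.univ.filter fun i => v i = r).card} : ℝ) / (m.factorial : ℝ) ^ n
/-- The plurality score of `c` (number of voters ranking `c` first). -/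
def plu {m : ℕ} (π : Profile m) (c : Fin m) : ℕ := score π c Finset.univ

/-- The Plurality-with-Runoff winner for tie-breaking rule `tb`: the two candidates
with highest plurality scores (ties broken by `tb`) advance to a runoff, won by the one
preferred by more voters (ties broken by `tb`). -/
def pr {m : ℕ} (tb : Finset (Fin m) → Fin m) (π : Profile m) : Fin m :=
  let a := tb (Finset.univ.filter fun c => ∀ b, plu π b ≤ plu π c)
  let b := tb ((Finset.univ.erase a).filter
      fun c => ∀ d ∈ Finset.univ.erase a, plu π d ≤ plu π c)
  let nab := ∑ r ∈ Finset.univ.filter (fun r : Ranking m => r a < r b), π r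
  let nba := ∑ r ∈ Finset.univ.filter (fun r : Ranking m => r b < r a), π r
  if nba < nab then a else if nab < nba then b else tb {a, b}


namespace Aux

open Finset

/-! ### Counting permutations -/

variable {m : ℕ}

lemma card_filter_eq_of_iff (p q : Ranking m → Prop) [DecidablePred p] [DecidablePred q]
    (τ : Ranking m) (h : ∀ σ, p σ ↔ q (σ * τ)) :
    (univ.filter p).card = (univ.filter q).card := by
  apply Finset.card_bij' (fun σ _ => σ * τ) (fun σ _ => σ * τ⁻¹)
  · intro a ha
    simp only [mem_filter, mem_univ, true_and] at ha ⊢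
    exact (h a).1 ha
  · intro a ha
    simp only [mem_filter, mem_univ, true_and] at ha ⊢
    rw [h]
    simpa using ha
  · intro a ha; group
  · intro a ha; group

lemma not_lt_iff (σ : Ranking m) {b w : Fin m} (h : b ≠ w) : (¬ σ b < σ w) ↔ σ w < σ b := by
  have hne : σ w ≠ σ b := fun e => h (σ.injective e).symm
  rw [not_lt]
  exact ⟨fun hle => hle.lt_of_ne hne, le_of_lt⟩

lemma filter_not_lt (b w : Fin m) (hbw : b ≠ w) :
    (univ.filter fun σ : Ranking m => ¬ σ b < σ w)
      = (univ.filter fun σ : Ranking m => σ w < σ b) :=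
  Finset.filter_congr (fun σ _ => by rw [not_lt_iff σ hbw])

lemma two_mul_card_lt (b w : Fin m) (hbw : b ≠ w) :
    2 * (univ.filter fun σ : Ranking m => σ b < σ w).card = m.factorial := by
  have h1 : (univ.filter fun σ : Ranking m => σ b < σ w).card
      = (univ.filter fun σ : Ranking m => σ w < σ b).card := by
    apply card_filter_eq_of_iff _ _ (Equiv.swap b w)
    intro σ
    simp [Equiv.Perm.mul_apply, Equiv.swap_apply_left, Equiv.swap_apply_right]
  have h2 : (univ.filter fun σ : Ranking m => σ b < σ w).card
      + (univ.filter fun σ : Ranking m => ¬ σ b < σ w).card = m.factorial := by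
    rw [Finset.card_filter_add_card_filter_not]
    simp [Fintype.card_perm]
  rw [filter_not_lt b w hbw] at h2
  omega

section NZ
variable [NeZero m]

lemma card_fix (c : Fin m) (k : Fin m) :
    (univ.filter fun σ : Ranking m => σ c = k).card
      = (univ.filter fun σ : Ranking m => σ c = 0).card := by
  apply Finset.card_bij' (fun σ _ => Equiv.swap 0 k * σ) (fun σ _ => Equiv.swap 0 k * σ)
  · intro a ha
    simp only [mem_filter, mem_univ, true_and, Equiv.Perm.mul_apply] at ha ⊢
    rw [ha]; exact Equiv.swap_apply_right 0 k
  · intro a ha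
    simp only [mem_filter, mem_univ, true_and, Equiv.Perm.mul_apply] at ha ⊢
    rw [ha]; exact Equiv.swap_apply_left 0 k
  · intro a _; rw [← mul_assoc, Equiv.swap_mul_self, one_mul]
  · intro a _; rw [← mul_assoc, Equiv.swap_mul_self, one_mul]

lemma m_mul_card_first (c : Fin m) :
    m * (univ.filter fun σ : Ranking m => σ c = 0).card = m.factorial := by
  have h : ∑ k : Fin m, (univ.filter fun σ : Ranking m => σ c = k).card
      = (univ : Finset (Ranking m)).card :=
    (Finset.card_eq_sum_card_fiberwise (f := fun σ : Ranking m => σ c)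
      (fun x _ => mem_univ _)).symm
  rw [Finset.sum_congr rfl (fun k _ => card_fix c k)] at h
  simp only [Finset.sum_const, card_univ, smul_eq_mul, Fintype.card_fin] at h
  rw [h, Fintype.card_perm, Fintype.card_fin]

lemma split3 (p q : Ranking m → Prop) [DecidablePred p] [DecidablePred q] :
    (univ.filter fun σ => p σ ∧ q σ).card + (univ.filter fun σ => p σ ∧ ¬ q σ).card
      = (univ.filter p).card := by
  rw [← Finset.filter_filter, ← Finset.filter_filter,
    Finset.card_filter_add_card_filter_not]

lemma six_mul_card (w b c : Fin m) (hwb : w ≠ b) (hwc : w ≠ c) (hbc : b ≠ c) :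
    6 * (univ.filter fun σ : Ranking m => σ w < σ b ∧ σ b < σ c).card = m.factorial := by
  have hsplit1 : (univ.filter fun σ : Ranking m => (σ w < σ b) ∧ σ c < σ w).card
      + (univ.filter fun σ : Ranking m => (σ w < σ b) ∧ ¬ σ c < σ w).card
      = (univ.filter fun σ : Ranking m => σ w < σ b).card := split3 _ _
  have e1 : (univ.filter fun σ : Ranking m => (σ w < σ b) ∧ ¬ σ c < σ w)
      = (univ.filter fun σ : Ranking m => (σ w < σ b) ∧ σ w < σ c) :=
    Finset.filter_congr (fun σ _ => by rw [not_lt_iff σ hwc.symm])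
  have hsplit2 : (univ.filter fun σ : Ranking m => ((σ w < σ b) ∧ σ w < σ c) ∧ σ c < σ b).card
      + (univ.filter fun σ : Ranking m => ((σ w < σ b) ∧ σ w < σ c) ∧ ¬ σ c < σ b).card
      = (univ.filter fun σ : Ranking m => (σ w < σ b) ∧ σ w < σ c).card := split3 _ _
  have e2 : (univ.filter fun σ : Ranking m => ((σ w < σ b) ∧ σ w < σ c) ∧ ¬ σ c < σ b)
      = (univ.filter fun σ : Ranking m => σ w < σ b ∧ σ b < σ c) := by
    apply Finset.filter_congr
    intro σ _
    rw [not_lt_iff σ hbc.symm]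
    constructor
    · rintro ⟨⟨h1, _⟩, h3⟩; exact ⟨h1, h3⟩
    · rintro ⟨h1, h3⟩; exact ⟨⟨h1, h1.trans h3⟩, h3⟩
  have b32 : (univ.filter fun σ : Ranking m => σ w < σ b ∧ σ b < σ c).card
      = (univ.filter fun σ : Ranking m => ((σ w < σ b) ∧ σ w < σ c) ∧ σ c < σ b).card := by
    apply card_filter_eq_of_iff _ _ (Equiv.swap b c)
    intro σ
    have hb : σ (Equiv.swap b c b) = σ c := by rw [Equiv.swap_apply_left]
    have hc : σ (Equiv.swap b c c) = σ b := by rw [Equiv.swap_apply_right]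
    have hw : σ (Equiv.swap b c w) = σ w := by
      rw [Equiv.swap_apply_of_ne_of_ne hwb hwc]
    simp only [Equiv.Perm.mul_apply, hb, hc, hw]
    constructor
    · rintro ⟨h1, h2⟩; exact ⟨⟨h1.trans h2, h1⟩, h2⟩
    · rintro ⟨⟨_, h2⟩, h3⟩; exact ⟨h2, h3⟩
  have b12 : (univ.filter fun σ : Ranking m => (σ w < σ b) ∧ σ c < σ w).card
      = (univ.filter fun σ : Ranking m => ((σ w < σ b) ∧ σ w < σ c) ∧ σ c < σ b).card := by
    apply card_filter_eq_of_iff _ _ (Equiv.swap w c)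
    intro σ
    have hw : σ (Equiv.swap w c w) = σ c := by rw [Equiv.swap_apply_left]
    have hc : σ (Equiv.swap w c c) = σ w := by rw [Equiv.swap_apply_right]
    have hb : σ (Equiv.swap w c b) = σ b := by
      rw [Equiv.swap_apply_of_ne_of_ne hwb.symm hbc]
    simp only [Equiv.Perm.mul_apply, hw, hc, hb]
    constructor
    · rintro ⟨h1, h2⟩; exact ⟨⟨h2.trans h1, h2⟩, h1⟩
    · rintro ⟨⟨_, h2⟩, h3⟩; exact ⟨h3, h2⟩
  have htot := two_mul_card_lt w b hwb
  rw [e1] at hsplit1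
  rw [e2] at hsplit2
  omega

lemma three_mul_card (w b c : Fin m) (hwb : w ≠ b) (hwc : w ≠ c) (hbc : b ≠ c) :
    3 * (univ.filter fun σ : Ranking m => σ w < σ b ∧ σ c < σ b).card = m.factorial := by
  have hsplit2 : (univ.filter fun σ : Ranking m => (σ w < σ b) ∧ σ b < σ c).card
      + (univ.filter fun σ : Ranking m => (σ w < σ b) ∧ ¬ σ b < σ c).card
      = (univ.filter fun σ : Ranking m => σ w < σ b).card := split3 _ _
  have e2 : (univ.filter fun σ : Ranking m => (σ w < σ b) ∧ ¬ σ b < σ c)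
      = (univ.filter fun σ : Ranking m => (σ w < σ b) ∧ σ c < σ b) :=
    Finset.filter_congr (fun σ _ => by rw [not_lt_iff σ hbc])
  have h6 := six_mul_card w b c hwb hwc hbc
  have htot := two_mul_card_lt w b hwb
  rw [e2] at hsplit2
  omega

lemma two_m_mul_card (d b w : Fin m) (hdb : d ≠ b) (hdw : d ≠ w) (hbw : b ≠ w) :
    2 * m * (univ.filter fun σ : Ranking m => σ d = 0 ∧ σ w < σ b).card = m.factorial := by
  have hb : (univ.filter fun σ : Ranking m => σ d = 0 ∧ σ w < σ b).card
      = (univ.filter fun σ : Ranking m => σ d = 0 ∧ σ b < σ w).card := by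
    apply card_filter_eq_of_iff _ _ (Equiv.swap w b)
    intro σ
    have h1 : σ (Equiv.swap w b d) = σ d := by
      rw [Equiv.swap_apply_of_ne_of_ne hdw hdb]
    have h2 : σ (Equiv.swap w b w) = σ b := by rw [Equiv.swap_apply_left]
    have h3 : σ (Equiv.swap w b b) = σ w := by rw [Equiv.swap_apply_right]
    simp only [Equiv.Perm.mul_apply, h1, h2, h3]
  have hsplit : (univ.filter fun σ : Ranking m => (σ d = 0) ∧ σ w < σ b).card
      + (univ.filter fun σ : Ranking m => (σ d = 0) ∧ ¬ σ w < σ b).card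
      = (univ.filter fun σ : Ranking m => σ d = (0 : Fin m)).card := split3 _ _
  have e1 : (univ.filter fun σ : Ranking m => (σ d = 0) ∧ ¬ σ w < σ b)
      = (univ.filter fun σ : Ranking m => (σ d = 0) ∧ σ b < σ w) :=
    Finset.filter_congr (fun σ _ => by rw [not_lt_iff σ hbw.symm])
  have hm := m_mul_card_first (m := m) d
  rw [e1] at hsplit
  have h2 : 2 * (univ.filter fun σ : Ranking m => σ d = 0 ∧ σ w < σ b).card
      = (univ.filter fun σ : Ranking m => σ d = (0:Fin m)).card := by omega
  calc 2 * m * (univ.filter fun σ : Ranking m => σ d = 0 ∧ σ w < σ b).card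
      = m * (2 * (univ.filter fun σ : Ranking m => σ d = 0 ∧ σ w < σ b).card) := by ring
    _ = m.factorial := by rw [h2, hm]

end NZ

/-! ### Second moment computation -/

section Cheb
variable {α : Type*} [Fintype α] [DecidableEq α]

def Y (r₀ : α) (a : α) : ℤ := if a = r₀ then (Fintype.card α : ℤ) - 1 else -1

lemma Y_eq (r₀ a : α) : Y r₀ a = (if a = r₀ then (Fintype.card α : ℤ) else 0) - 1 := by
  unfold Y; split <;> ring

lemma sum_Y_single (r₀ : α) : ∑ a, Y r₀ a = 0 := by
  simp only [Y_eq, Finset.sum_sub_distrib]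
  rw [Finset.sum_ite_eq' univ r₀ (fun _ => (Fintype.card α : ℤ))]
  simp

lemma Y_sq_eq (r₀ a : α) :
    (Y r₀ a)^2 = (if a = r₀ then ((Fintype.card α : ℤ) - 1)^2 - 1 else 0) + 1 := by
  unfold Y; split <;> ring

lemma sum_Y_sq_single (r₀ : α) :
    ∑ a, (Y r₀ a)^2 = (Fintype.card α : ℤ)^2 - Fintype.card α := by
  simp only [Y_sq_eq, Finset.sum_add_distrib]
  rw [Finset.sum_ite_eq' univ r₀ (fun _ => ((Fintype.card α : ℤ) - 1)^2 - 1)]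
  simp only [mem_univ, if_true, Finset.sum_const, card_univ, nsmul_eq_mul, mul_one]
  ring

lemma sumY_cons (r₀ : α) (n : ℕ) (a : α) (v : Fin n → α) :
    (∑ i, Y r₀ ((Fin.consEquiv (fun _ : Fin (n+1) => α)) (a, v) i))
      = Y r₀ a + ∑ i, Y r₀ (v i) := by
  rw [Fin.sum_univ_succ]
  simp [Fin.consEquiv]

lemma sum_Y (r₀ : α) (n : ℕ) :
    ∑ v : Fin n → α, (∑ i, Y r₀ (v i)) = 0 := by
  induction n with
  | zero => simp
  | succ n ih =>
    rw [← Equiv.sum_comp (Fin.consEquiv (fun _ : Fin (n+1) => α))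
      (fun v => ∑ i, Y r₀ (v i)), Fintype.sum_prod_type]
    have h : ∀ (a : α) (v : Fin n → α),
        (∑ i, Y r₀ ((Fin.consEquiv (fun _ : Fin (n+1) => α)) (a, v) i))
          = Y r₀ a + ∑ i, Y r₀ (v i) := by
      intro a v
      exact sumY_cons r₀ n a v
    simp only [h]
    have h2 : ∀ a : α, ∑ v : Fin n → α, (Y r₀ a + ∑ i, Y r₀ (v i))
        = (Fintype.card α : ℤ)^n * Y r₀ a := by
      intro a
      rw [Finset.sum_add_distrib, ih, Finset.sum_const, add_zero]
      simp [Fintype.card_fun, mul_comm]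
    rw [Finset.sum_congr rfl (fun a _ => h2 a), ← Finset.mul_sum, sum_Y_single, mul_zero]

lemma sum_Y_sq (r₀ : α) (n : ℕ) :
    ∑ v : Fin n → α, (∑ i, Y r₀ (v i))^2
      = n * (Fintype.card α : ℤ)^n * ((Fintype.card α : ℤ) - 1) := by
  induction n with
  | zero => simp
  | succ n ih =>
    rw [← Equiv.sum_comp (Fin.consEquiv (fun _ : Fin (n+1) => α))
      (fun v => (∑ i, Y r₀ (v i))^2), Fintype.sum_prod_type]
    have h : ∀ (a : α) (v : Fin n → α),
        (∑ i, Y r₀ ((Fin.consEquiv (fun _ : Fin (n+1) => α)) (a, v) i))^2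
          = (Y r₀ a)^2 + 2 * Y r₀ a * (∑ i, Y r₀ (v i)) + (∑ i, Y r₀ (v i))^2 := by
      intro a v
      rw [sumY_cons r₀ n a v]; ring
    simp only [h]
    have h2 : ∀ a : α, ∑ v : Fin n → α,
        ((Y r₀ a)^2 + 2 * Y r₀ a * (∑ i, Y r₀ (v i)) + (∑ i, Y r₀ (v i))^2)
        = (Fintype.card α : ℤ)^n * (Y r₀ a)^2
          + n * (Fintype.card α : ℤ)^n * ((Fintype.card α : ℤ) - 1) := by
      intro a
      rw [Finset.sum_add_distrib, Finset.sum_add_distrib, ih, ← Finset.mul_sum, sum_Y r₀ n,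
        mul_zero, add_zero, Finset.sum_const]
      simp [Fintype.card_fun, mul_comm]
    rw [Finset.sum_congr rfl (fun a _ => h2 a), Finset.sum_add_distrib, ← Finset.mul_sum,
      sum_Y_sq_single, Finset.sum_const]
    simp only [card_univ, Fintype.card_fun, Fintype.card_fin, nsmul_eq_mul]
    push_cast
    ring

lemma D_eq (r₀ : α) (n : ℕ) (v : Fin n → α) :
    ∑ i, Y r₀ (v i)
      = (Fintype.card α : ℤ) * (univ.filter fun i => v i = r₀).card - n := by
  have h : ∀ i, Y r₀ (v i) = (if v i = r₀ then (Fintype.card α : ℤ) else 0) - 1 :=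
    fun i => Y_eq _ _
  simp only [h, Finset.sum_sub_distrib, Finset.sum_const, card_univ, Fintype.card_fin,
    nsmul_eq_mul, mul_one]
  congr 1
  rw [Finset.card_filter]
  push_cast
  rw [Finset.mul_sum]
  simp [mul_ite]

lemma card_bad (r₀ : α) (n : ℕ) (hn : 0 < n) :
    (univ.filter fun v : Fin n → α =>
        n < 1000 * ((Fintype.card α : ℤ) * (univ.filter fun i => v i = r₀).card - n).natAbs).card
        * n ≤ 1000000 * (Fintype.card α)^(n+1) := by
  set K : ℤ := (Fintype.card α : ℤ) with hK
  have hK0 : 0 ≤ K := Int.natCast_nonneg _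
  set Bad := univ.filter fun v : Fin n → α =>
      n < 1000 * ((Fintype.card α : ℤ) * (univ.filter fun i => v i = r₀).card - n).natAbs
    with hBad
  have key : ∀ v ∈ Bad, (n:ℤ)^2 ≤ 1000000 * (∑ i, Y r₀ (v i))^2 := by
    intro v hv
    rw [hBad, mem_filter] at hv
    have h1 : (n:ℤ) < 1000 * |∑ i, Y r₀ (v i)| := by
      rw [D_eq r₀ n v, Int.abs_eq_natAbs]
      exact_mod_cast hv.2
    nlinarith [abs_nonneg (∑ i, Y r₀ (v i)), sq_abs (∑ i, Y r₀ (v i)),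
      Int.natCast_nonneg n]
  have sum1 : (Bad.card : ℤ) * n^2 ≤ ∑ v ∈ Bad, 1000000 * (∑ i, Y r₀ (v i))^2 := by
    calc (Bad.card : ℤ) * n^2 = ∑ _v ∈ Bad, (n:ℤ)^2 := by
          rw [Finset.sum_const, nsmul_eq_mul]
      _ ≤ _ := Finset.sum_le_sum key
  have sum2 : ∑ v ∈ Bad, 1000000 * (∑ i, Y r₀ (v i))^2
      ≤ ∑ v : Fin n → α, 1000000 * (∑ i, Y r₀ (v i))^2 :=
    Finset.sum_le_sum_of_subset_of_nonneg (Finset.subset_univ _)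
      (fun v _ _ => by positivity)
  have sum3 : ∑ v : Fin n → α, 1000000 * (∑ i, Y r₀ (v i))^2
      = 1000000 * ((n : ℤ) * K^n * (K - 1)) := by
    rw [← Finset.mul_sum, sum_Y_sq]
  have hfin : (Bad.card : ℤ) * n^2 ≤ 1000000 * K^(n+1) * n := by
    have h4 : 1000000 * ((n : ℤ) * K^n * (K-1)) ≤ 1000000 * K^(n+1) * n := by
      have hp : (0:ℤ) ≤ K^n := pow_nonneg hK0 n
      have : K^n * (K-1) ≤ K^(n+1) := by
        rw [pow_succ]
        nlinarith
      nlinarith [Int.natCast_nonneg n]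
    calc (Bad.card : ℤ) * n^2 ≤ _ := sum1.trans (sum2.trans_eq sum3)
      _ ≤ _ := h4
  have hnat : Bad.card * n * n ≤ 1000000 * (Fintype.card α)^(n+1) * n := by
    have := hfin
    zify
    nlinarith [this]
  exact Nat.le_of_mul_le_mul_right hnat hn

end Cheb

/-! ### Evaluating `plu` -/

lemma first_iff [NeZero m] (σ : Ranking m) (d : Fin m) :
    (∀ b' ∈ univ, b' ≠ d → σ d < σ b') ↔ σ d = 0 := by
  constructor
  · intro h
    by_contra h0
    have hne : σ.symm 0 ≠ d := by
      intro e
      apply h0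
      rw [← e, Equiv.apply_symm_apply]
    have hlt := h (σ.symm 0) (mem_univ _) hne
    rw [Equiv.apply_symm_apply] at hlt
    exact absurd hlt (by rw [Fin.lt_def]; simp)
  · intro h0 b' _ hne
    rw [h0]
    have hne0 : σ b' ≠ 0 := by
      intro e
      exact hne (σ.injective (e.trans h0.symm))
    have hv : (σ b' : ℕ) ≠ 0 := by
      intro e
      exact hne0 (Fin.ext (by rw [e]; rfl))
    rw [Fin.lt_def]
    have h0' : ((0 : Fin m) : ℕ) = 0 := rfl
    omega

lemma plu_filter [NeZero m] (π : Profile m) (d : Fin m) :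
    plu π d = ∑ r ∈ univ.filter (fun r : Ranking m => r d = 0), π r := by
  unfold plu score
  congr 1
  exact Finset.filter_congr (fun σ _ => first_iff σ d)

/-! ### `pr` evaluation helpers -/

lemma pr_eq_fst (tb : Finset (Fin m) → Fin m) (π : Profile m) (bb cc : Fin m)
    (ha : tb (Finset.univ.filter fun c => ∀ b, plu π b ≤ plu π c) = bb)
    (hB : ((Finset.univ.erase bb).filter
      fun c => ∀ d ∈ Finset.univ.erase bb, plu π d ≤ plu π c) = {cc})
    (htbc : tb ({cc} : Finset (Fin m)) = cc)
    (hlt : ∑ r ∈ Finset.univ.filter (fun r : Ranking m => r cc < r bb), π r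
      < ∑ r ∈ Finset.univ.filter (fun r : Ranking m => r bb < r cc), π r) :
    pr tb π = bb := by
  rw [pr]
  simp only [ha, hB, htbc]
  rw [if_pos hlt]

lemma pr_eq_snd (tb : Finset (Fin m) → Fin m) (π : Profile m) (bb cc : Fin m)
    (ha : tb (Finset.univ.filter fun c => ∀ b, plu π b ≤ plu π c) = cc)
    (hB : ((Finset.univ.erase cc).filter
      fun c => ∀ d ∈ Finset.univ.erase cc, plu π d ≤ plu π c) = {bb})
    (htbb : tb ({bb} : Finset (Fin m)) = bb)
    (hlt : ∑ r ∈ Finset.univ.filter (fun r : Ranking m => r cc < r bb), π r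
      < ∑ r ∈ Finset.univ.filter (fun r : Ranking m => r bb < r cc), π r) :
    pr tb π = bb := by
  rw [pr]
  simp only [ha, hB, htbb]
  rw [if_neg (not_lt.mpr hlt.le), if_pos hlt]

/-! ### Sum estimates -/

lemma sum_dev (π : Profile m) (n : ℕ) (hν : numVoters π = n)
    (hdev : ∀ r : Ranking m, |(π r : ℝ) - n / m.factorial| ≤ (n : ℝ) / (1000 * m.factorial))
    (p : Ranking m → Prop) [DecidablePred p] (j : ℕ) (hj : 0 < j)
    (hcard : j * (univ.filter p).card = m.factorial) :
    |((∑ r ∈ univ.filter p, π r : ℕ) : ℝ) - (n : ℝ) / j| ≤ (n : ℝ) / 1000 := by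
  have hKpos : (0:ℝ) < m.factorial := by
    exact_mod_cast m.factorial_pos
  have hjpos : (0:ℝ) < j := by exact_mod_cast hj
  have hcard' : ((univ.filter p).card : ℝ) = (m.factorial : ℝ) / j := by
    rw [eq_div_iff (ne_of_gt hjpos)]
    rw [mul_comm]
    exact_mod_cast hcard
  have h1 : ((∑ r ∈ univ.filter p, π r : ℕ) : ℝ) - (n : ℝ) / j
      = ∑ r ∈ univ.filter p, ((π r : ℝ) - (n : ℝ) / m.factorial) := by
    rw [Finset.sum_sub_distrib, Finset.sum_const, nsmul_eq_mul, hcard']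
    push_cast
    field_simp
  rw [h1]
  calc |∑ r ∈ univ.filter p, ((π r : ℝ) - (n : ℝ) / m.factorial)|
      ≤ ∑ r ∈ univ.filter p, |(π r : ℝ) - (n : ℝ) / m.factorial| :=
        Finset.abs_sum_le_sum_abs _ _
    _ ≤ ∑ _r ∈ univ.filter p, (n : ℝ) / (1000 * m.factorial) :=
        Finset.sum_le_sum (fun r _ => hdev r)
    _ = ((univ.filter p).card : ℝ) * ((n : ℝ) / (1000 * m.factorial)) := by
        rw [Finset.sum_const, nsmul_eq_mul]
    _ = (n : ℝ) / (1000 * j) := by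
        rw [hcard']
        field_simp
    _ ≤ (n : ℝ) / 1000 := by
        have hj1 : (1:ℝ) ≤ j := by exact_mod_cast hj
        apply div_le_div_of_nonneg_left (by positivity) (by positivity)
        linarith

end Aux

section DetCM

open Finset Aux

set_option maxHeartbeats 1600000 in
lemma det_CM {m : ℕ} (hm : 4 ≤ m) (tb : Finset (Fin m) → Fin m) (htb : IsTieBreak tb)
    (π : Profile m) (hn : 1000000 ≤ numVoters π)
    (hdev : ∀ r : Ranking m, 1000 * ((m.factorial : ℤ) * π r - numVoters π).natAbs
      ≤ numVoters π) :
    IsCM (pr tb) π := by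
  haveI : NeZero m := ⟨by omega⟩
  classical
  set n := numVoters π with hndef
  have hK24 : 24 ≤ m.factorial := by
    have h4 : Nat.factorial 4 ≤ m.factorial := Nat.factorial_le hm
    simpa [Nat.factorial] using h4
  have hnR : (1000000 : ℝ) ≤ (n:ℝ) := by exact_mod_cast hn
  have hn0 : (0:ℝ) < (n:ℝ) := by linarith
  have hKR : (24 : ℝ) ≤ (m.factorial :ℝ) := by exact_mod_cast hK24
  have hKR0 : (0:ℝ) < (m.factorial:ℝ) := by linarith
  have hmR : (4:ℝ) ≤ (m:ℝ) := by exact_mod_cast hm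
  have hmR0 : (0:ℝ) < (m:ℝ) := by linarith
  -- real per-ranking deviation
  have hdev' : ∀ r : Ranking m,
      |(π r : ℝ) - (n:ℝ) / m.factorial| ≤ (n:ℝ) / (1000 * m.factorial) := by
    intro r
    have h := hdev r
    have h2 : |(m.factorial:ℝ) * (π r) - (n:ℝ)| * 1000 ≤ (n:ℝ) := by
      have hcast : ((((m.factorial : ℤ) * (π r) - (n:ℤ)).natAbs : ℕ) : ℝ)
          = |(m.factorial:ℝ) * (π r) - (n:ℝ)| := by
        rw [Nat.cast_natAbs]
        push_cast
        ring_nf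
      have h3 : ((1000 * (((m.factorial : ℤ) * (π r) - (n:ℤ)).natAbs) : ℕ) : ℝ) ≤ (n:ℝ) := by
        exact_mod_cast h
      rw [Nat.cast_mul, hcast] at h3
      push_cast at h3
      linarith
    have heq : (π r : ℝ) - (n:ℝ)/m.factorial = ((m.factorial:ℝ) * π r - n)/m.factorial := by
      field_simp
    rw [heq, abs_div, abs_of_pos hKR0, div_le_div_iff₀ hKR0 (by positivity)]
    nlinarith [mul_le_mul_of_nonneg_right h2 (le_of_lt hKR0)]
  -- the current winner and two other candidates
  set w := pr tb π with hwdef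
  have hcard_erase : 1 < (univ.erase w).card := by
    rw [Finset.card_erase_of_mem (mem_univ w), card_univ, Fintype.card_fin]
    omega
  obtain ⟨b, hbmem, c, hcmem, hbc⟩ := Finset.one_lt_card.mp hcard_erase
  have hbw : b ≠ w := (Finset.mem_erase.mp hbmem).1
  have hcw : c ≠ w := (Finset.mem_erase.mp hcmem).1
  -- special rankings
  set g : Ranking m := Equiv.swap c 0 with hgdef
  set rb : Ranking m := Equiv.swap b 0 with hrbdef
  set rc : Ranking m := Equiv.swap (g b) 1 * g with hrcdef
  have h1val : ((1 : Fin m) : ℕ) = 1 := by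
    obtain ⟨k, rfl⟩ : ∃ k, m = k + 1 := ⟨m - 1, by omega⟩
    simp [Fin.val_one']
    omega
  have h0val : ((0 : Fin m) : ℕ) = 0 := rfl
  have h01 : (0 : Fin m) ≠ 1 := by
    intro e
    have h := congrArg Fin.val e
    rw [h0val, h1val] at h
    omega
  have hswap0 : ∀ (u y : Fin m), Equiv.swap u 0 y = 0 ↔ y = u := by
    intro u y
    rw [Equiv.apply_eq_iff_eq_symm_apply]
    simp
  have hrb_b : rb b = 0 := Equiv.swap_apply_left b 0
  have hrb0 : ∀ y, rb y = 0 ↔ y = b := fun y => hswap0 b y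
  have hg_c : g c = 0 := Equiv.swap_apply_left c 0
  have hgb0 : g b ≠ 0 := fun e => hbc ((hswap0 c b).mp e)
  have hrc_b : rc b = 1 := by
    rw [hrcdef]
    simp [Equiv.Perm.mul_apply, Equiv.swap_apply_left]
  have hrc_c : rc c = 0 := by
    rw [hrcdef]
    simp only [Equiv.Perm.mul_apply]
    rw [hg_c]
    exact Equiv.swap_apply_of_ne_of_ne (fun e => hgb0 e.symm) h01
  have hrc0 : ∀ y, rc y = 0 ↔ y = c := by
    intro y
    constructor
    · intro e
      exact rc.injective (e.trans hrc_c.symm)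
    · intro e; rw [e, hrc_c]
  have hpos_of_ne : ∀ (r : Ranking m) (d : Fin m), r d ≠ 0 → (0 : Fin m) < r d := by
    intro r d hne
    rw [Fin.lt_def, h0val]
    have hv : (r d : ℕ) ≠ 0 := fun e => hne (Fin.ext (by rw [e]; exact h0val.symm))
    omega
  have hrbC : rb b < rb w := by
    rw [hrb_b]
    exact hpos_of_ne rb w (fun e => hbw.symm ((hrb0 w).mp e))
  have hrcC : rc b < rc w := by
    rw [hrc_b]
    have ha1 : rc w ≠ 0 := fun e => hcw.symm ((hrc0 w).mp e)
    have ha2 : rc w ≠ 1 := by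
      intro e
      exact hbw (rc.injective (hrc_b.trans e.symm))
    rw [Fin.lt_def, h1val]
    have hv1 : (rc w : ℕ) ≠ 0 := fun e => ha1 (Fin.ext (by rw [e]; exact h0val.symm))
    have hv2 : (rc w : ℕ) ≠ 1 := fun e => ha2 (Fin.ext (by rw [e]; exact h1val.symm))
    omega
  have hrbrc : rb ≠ rc := by
    intro e
    have h := DFunLike.congr_fun e b
    rw [hrb_b, hrc_b] at h
    exact h01 h
  -- the aggregated quantities
  set C : Finset (Ranking m) := univ.filter (fun r : Ranking m => r b < r w) with hCdef
  set s : ℕ := ∑ r ∈ C, π r with hsdef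
  set x : ℕ := 7 * n / 20 with hxdef
  set pw : ℕ := ∑ r ∈ univ.filter (fun r : Ranking m => r w = 0), π r with hpwdef
  set qc : ℕ := ∑ r ∈ univ.filter (fun r : Ranking m => r c = 0 ∧ r w < r b), π r with hqcdef
  set P1 : ℕ := ∑ r ∈ univ.filter (fun r : Ranking m => r w < r b ∧ r b < r c), π r with hP1def
  set P2 : ℕ := ∑ r ∈ univ.filter (fun r : Ranking m => r w < r b ∧ r c < r b), π r with hP2def
  -- real bounds on the aggregated quantities
  have hbnd_s : |(s:ℝ) - (n:ℝ)/2| ≤ (n:ℝ)/1000 := by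
    have h := sum_dev π n hndef.symm hdev' (fun r : Ranking m => r b < r w) 2
      (by norm_num) (two_mul_card_lt b w hbw)
    rw [hsdef, hCdef]
    push_cast at h ⊢
    exact h
  have hbnd_pw : |(pw:ℝ) - (n:ℝ)/(m:ℝ)| ≤ (n:ℝ)/1000 := by
    have h := sum_dev π n hndef.symm hdev' (fun r : Ranking m => r w = 0) m
      (by omega) (m_mul_card_first w)
    rw [hpwdef]
    push_cast at h ⊢
    exact h
  have hbnd_qc : |(qc:ℝ) - (n:ℝ)/(2*(m:ℝ))| ≤ (n:ℝ)/1000 := by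
    have h := sum_dev π n hndef.symm hdev' (fun r : Ranking m => r c = 0 ∧ r w < r b) (2*m)
      (by omega) (two_m_mul_card c b w hbc.symm hcw hbw)
    rw [hqcdef]
    push_cast at h ⊢
    exact h
  have hbnd_pd : ∀ d : Fin m, d ≠ b → d ≠ w →
      |((∑ r ∈ univ.filter (fun r : Ranking m => r d = 0 ∧ r w < r b), π r : ℕ):ℝ)
        - (n:ℝ)/(2*(m:ℝ))| ≤ (n:ℝ)/1000 := by
    intro d hdb hdw
    have h := sum_dev π n hndef.symm hdev' (fun r : Ranking m => r d = 0 ∧ r w < r b) (2*m)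
      (by omega) (two_m_mul_card d b w hdb hdw hbw)
    push_cast at h ⊢
    exact h
  have hbnd_P1 : |(P1:ℝ) - (n:ℝ)/6| ≤ (n:ℝ)/1000 := by
    have h := sum_dev π n hndef.symm hdev' (fun r : Ranking m => r w < r b ∧ r b < r c) 6
      (by norm_num) (six_mul_card w b c hbw.symm hcw.symm hbc)
    rw [hP1def]
    push_cast at h ⊢
    exact h
  have hbnd_P2 : |(P2:ℝ) - (n:ℝ)/3| ≤ (n:ℝ)/1000 := by
    have h := sum_dev π n hndef.symm hdev' (fun r : Ranking m => r w < r b ∧ r c < r b) 3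
      (by norm_num) (three_mul_card w b c hbw.symm hcw.symm hbc)
    rw [hP2def]
    push_cast at h ⊢
    exact h
  -- bounds on x
  have hx1 : (x:ℝ) ≤ 7*(n:ℝ)/20 := by
    have h20 : 20 * x ≤ 7 * n := by rw [hxdef]; omega
    have h := (Nat.cast_le (α := ℝ)).mpr h20
    push_cast at h
    linarith
  have hx2 : 7*(n:ℝ)/20 - 1 ≤ (x:ℝ) := by
    have h20 : 7 * n < 20 * x + 20 := by rw [hxdef]; omega
    have h := (Nat.cast_lt (α := ℝ)).mpr h20
    push_cast at h
    linarith
  -- division facts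
  have hdm4 : (n:ℝ)/(m:ℝ) ≤ (n:ℝ)/4 :=
    div_le_div_of_nonneg_left (by positivity) (by norm_num) hmR
  have hd2m : (n:ℝ)/(2*(m:ℝ)) ≤ (n:ℝ)/8 :=
    div_le_div_of_nonneg_left (by positivity) (by norm_num) (by linarith)
  have hd2m0 : (0:ℝ) ≤ (n:ℝ)/(2*(m:ℝ)) := by positivity
  have hdmm : (n:ℝ)/(m:ℝ) = 2 * ((n:ℝ)/(2*(m:ℝ))) := by
    field_simp
  have hdK : (n:ℝ)/(m.factorial:ℝ) ≤ (n:ℝ)/24 :=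
    div_le_div_of_nonneg_left (by positivity) (by norm_num) hKR
  have hdKK : (n:ℝ)/(m.factorial:ℝ) = 2 * ((n:ℝ)/(2*(m.factorial:ℝ))) := by
    field_simp
  have hdK1000 : (n:ℝ)/(1000*(m.factorial:ℝ)) ≤ (n:ℝ)/(2*(m.factorial:ℝ)) :=
    div_le_div_of_nonneg_left (by positivity) (by positivity) (by linarith)
  have hdK2pos : (0:ℝ) < (n:ℝ)/(2*(m.factorial:ℝ)) := by positivity
  -- unpacked bounds
  have hs_lo := (abs_le.mp hbnd_s).1
  have hs_hi := (abs_le.mp hbnd_s).2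
  have hpw_lo := (abs_le.mp hbnd_pw).1
  have hpw_hi := (abs_le.mp hbnd_pw).2
  have hqc_lo := (abs_le.mp hbnd_qc).1
  have hqc_hi := (abs_le.mp hbnd_qc).2
  have hP1_lo := (abs_le.mp hbnd_P1).1
  have hP1_hi := (abs_le.mp hbnd_P1).2
  have hP2_lo := (abs_le.mp hbnd_P2).1
  have hP2_hi := (abs_le.mp hbnd_P2).2
  -- natural-number inequalities
  have hx_le_s : x ≤ s := by
    have h : (x:ℝ) ≤ (s:ℝ) := by linarith
    exact_mod_cast h
  have hsx_cast : ((s - x : ℕ) : ℝ) = (s:ℝ) - (x:ℝ) := by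
    rw [Nat.cast_sub hx_le_s]
  have hn1 : pw < x := by
    have h : (pw:ℝ) < (x:ℝ) := by linarith
    exact_mod_cast h
  have hn3 : pw < (s - x) + qc := by
    have h : (pw:ℝ) < ((s - x : ℕ):ℝ) + (qc:ℝ) := by
      rw [hsx_cast]
      linarith
    exact_mod_cast h
  have hn24 : ∀ d : Fin m, d ≠ b → d ≠ w →
      (∑ r ∈ univ.filter (fun r : Ranking m => r d = 0 ∧ r w < r b), π r) < x ∧
      (∑ r ∈ univ.filter (fun r : Ranking m => r d = 0 ∧ r w < r b), π r) < (s - x) + qc := by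
    intro d hdb hdw
    have hb := hbnd_pd d hdb hdw
    have h1 := (abs_le.mp hb).1
    have h2 := (abs_le.mp hb).2
    constructor
    · have h : ((∑ r ∈ univ.filter (fun r : Ranking m => r d = 0 ∧ r w < r b), π r : ℕ):ℝ)
          < (x:ℝ) := by linarith
      exact_mod_cast h
    · have h : ((∑ r ∈ univ.filter (fun r : Ranking m => r d = 0 ∧ r w < r b), π r : ℕ):ℝ)
          < ((s - x : ℕ):ℝ) + (qc:ℝ) := by
        rw [hsx_cast]
        linarith
      exact_mod_cast h
  have hn5 : (s - x) + P2 < x + P1 := by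
    have h : ((s - x : ℕ):ℝ) + (P2:ℝ) < (x:ℝ) + (P1:ℝ) := by
      rw [hsx_cast]
      linarith
    exact_mod_cast h
  have hn7 : ∀ r : Ranking m, 0 < π r := by
    intro r
    have h1 := (abs_le.mp (hdev' r)).1
    have h : (0:ℝ) < (π r : ℝ) := by linarith
    exact_mod_cast h
  have hn8 : π rb < x := by
    have h1 := (abs_le.mp (hdev' rb)).2
    have h : ((π rb : ℕ):ℝ) < (x:ℝ) := by linarith
    exact_mod_cast h
  have hn9 : π rc < s - x := by
    have h1 := (abs_le.mp (hdev' rc)).2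
    have h : ((π rc : ℕ):ℝ) < ((s - x : ℕ):ℝ) := by
      rw [hsx_cast]
      linarith
    exact_mod_cast h
  -- the manipulated profile
  set π' : Profile m := fun r =>
    if r = rb then x else if r = rc then s - x else if r b < r w then 0 else π r with hπ'def
  have hπ'_rb : π' rb = x := by rw [hπ'def]; simp
  have hπ'_rc : π' rc = s - x := by
    rw [hπ'def]
    simp [hrbrc.symm]
  have hπ'_inC : ∀ r, r ≠ rb → r ≠ rc → r b < r w → π' r = 0 := by
    intro r h1 h2 h3
    rw [hπ'def]
    simp [h1, h2, h3]
  have hπ'_notC : ∀ r, ¬ r b < r w → π' r = π r := by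
    intro r h3
    have h1 : r ≠ rb := fun e => h3 (by rw [e]; exact hrbC)
    have h2 : r ≠ rc := fun e => h3 (by rw [e]; exact hrcC)
    rw [hπ'def]
    simp [h1, h2, h3]
  have hsum : ∀ F : Finset (Ranking m), ∑ r ∈ F, π' r
      = (if rb ∈ F then x else 0) + (if rc ∈ F then s - x else 0)
        + ∑ r ∈ F.filter (fun r => ¬ r b < r w), π r := by
    intro F
    have hpt : ∀ r ∈ F, π' r = (if r = rb then x else 0) + (if r = rc then s - x else 0)
        + (if r b < r w then 0 else π r) := by
      intro r _
      by_cases h1 : r = rb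
      · subst h1
        rw [hπ'_rb, if_pos rfl, if_neg hrbrc, if_pos hrbC]
        omega
      · by_cases h2 : r = rc
        · subst h2
          rw [hπ'_rc, if_neg (Ne.symm hrbrc), if_pos rfl, if_pos hrcC]
          omega
        · by_cases h3 : r b < r w
          · rw [hπ'_inC r h1 h2 h3, if_neg h1, if_neg h2, if_pos h3]
          · rw [hπ'_notC r h3, if_neg h1, if_neg h2, if_neg h3]
            simp
    rw [Finset.sum_congr rfl hpt, Finset.sum_add_distrib, Finset.sum_add_distrib,
      Finset.sum_ite_eq' F rb (fun _ => x), Finset.sum_ite_eq' F rc (fun _ => s - x)]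
    congr 1
    rw [Finset.sum_filter]
    exact Finset.sum_congr rfl (fun r _ => (ite_not _ _ _).symm)
  -- plurality scores of the manipulated profile
  have hplub : plu π' b = x := by
    rw [plu_filter, hsum]
    have h1 : rb ∈ univ.filter (fun r : Ranking m => r b = 0) :=
      mem_filter.mpr ⟨mem_univ _, hrb_b⟩
    have h2 : rc ∉ univ.filter (fun r : Ranking m => r b = 0) := by
      simp only [mem_filter, mem_univ, true_and]
      rw [hrc_b]
      exact fun e => h01 e.symm
    have h3 : (univ.filter (fun r : Ranking m => r b = 0)).filter
        (fun r => ¬ r b < r w) = ∅ := by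
      apply Finset.filter_false_of_mem
      intro r hr
      have hb0 := (mem_filter.mp hr).2
      intro hcon
      apply hcon
      rw [hb0]
      exact hpos_of_ne r w (fun e => hbw (r.injective (hb0.trans e.symm)))
    rw [if_pos h1, if_neg h2, h3]
    simp
  have hpluc : plu π' c = (s - x) + qc := by
    rw [plu_filter, hsum]
    have h1 : rb ∉ univ.filter (fun r : Ranking m => r c = 0) := by
      simp only [mem_filter, mem_univ, true_and]
      exact fun e => hbc ((hrb0 c).mp e).symm
    have h2 : rc ∈ univ.filter (fun r : Ranking m => r c = 0) :=
      mem_filter.mpr ⟨mem_univ _, hrc_c⟩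
    rw [if_neg h1, if_pos h2, zero_add]
    congr 1
    rw [hqcdef, Finset.filter_filter]
    congr 1
    exact Finset.filter_congr (fun r _ => by rw [not_lt_iff r hbw])
  have hpluw : plu π' w = pw := by
    rw [plu_filter, hsum]
    have h1 : rb ∉ univ.filter (fun r : Ranking m => r w = 0) := by
      simp only [mem_filter, mem_univ, true_and]
      exact fun e => hbw.symm ((hrb0 w).mp e)
    have h2 : rc ∉ univ.filter (fun r : Ranking m => r w = 0) := by
      simp only [mem_filter, mem_univ, true_and]
      exact fun e => hcw.symm ((hrc0 w).mp e)
    rw [if_neg h1, if_neg h2, zero_add, zero_add, hpwdef]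
    congr 1
    rw [Finset.filter_filter]
    apply Finset.filter_congr
    intro r _
    constructor
    · exact fun h => h.1
    · intro h
      refine ⟨h, ?_⟩
      rw [h]
      intro hlt
      rw [Fin.lt_def, h0val] at hlt
      omega
  have hplud : ∀ d : Fin m, d ≠ b → d ≠ c → d ≠ w →
      plu π' d = ∑ r ∈ univ.filter (fun r : Ranking m => r d = 0 ∧ r w < r b), π r := by
    intro d hdb hdc hdw
    rw [plu_filter, hsum]
    have h1 : rb ∉ univ.filter (fun r : Ranking m => r d = 0) := by
      simp only [mem_filter, mem_univ, true_and]
      exact fun e => hdb ((hrb0 d).mp e)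
    have h2 : rc ∉ univ.filter (fun r : Ranking m => r d = 0) := by
      simp only [mem_filter, mem_univ, true_and]
      exact fun e => hdc ((hrc0 d).mp e)
    rw [if_neg h1, if_neg h2, zero_add, zero_add, Finset.filter_filter]
    congr 1
    exact Finset.filter_congr (fun r _ => by rw [not_lt_iff r hbw])
  -- the two pairwise sums
  have hNbc : ∑ r ∈ univ.filter (fun r : Ranking m => r b < r c), π' r = x + P1 := by
    rw [hsum]
    have h1 : rb ∈ univ.filter (fun r : Ranking m => r b < r c) := by
      apply mem_filter.mpr
      refine ⟨mem_univ _, ?_⟩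
      rw [hrb_b]
      exact hpos_of_ne rb c (fun e => hbc ((hrb0 c).mp e).symm)
    have h2 : rc ∉ univ.filter (fun r : Ranking m => r b < r c) := by
      simp only [mem_filter, mem_univ, true_and]
      rw [hrc_b, hrc_c, Fin.lt_def, h1val, h0val]
      omega
    rw [if_pos h1, if_neg h2, add_zero]
    congr 1
    rw [hP1def, Finset.filter_filter]
    congr 1
    apply Finset.filter_congr
    intro r _
    rw [not_lt_iff r hbw]
    exact and_comm
  have hNcb : ∑ r ∈ univ.filter (fun r : Ranking m => r c < r b), π' r = (s - x) + P2 := by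
    rw [hsum]
    have h1 : rb ∉ univ.filter (fun r : Ranking m => r c < r b) := by
      simp only [mem_filter, mem_univ, true_and]
      rw [hrb_b]
      intro hlt
      rw [Fin.lt_def, h0val] at hlt
      omega
    have h2 : rc ∈ univ.filter (fun r : Ranking m => r c < r b) := by
      apply mem_filter.mpr
      refine ⟨mem_univ _, ?_⟩
      rw [hrc_b, hrc_c, Fin.lt_def, h1val, h0val]
      omega
    rw [if_neg h1, if_pos h2, zero_add]
    congr 1
    rw [hP2def, Finset.filter_filter]
    congr 1
    apply Finset.filter_congr
    intro r _
    rw [not_lt_iff r hbw]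
    exact and_comm
  -- number of voters is preserved
  have hnum : numVoters π' = n := by
    have h := hsum univ
    rw [if_pos (mem_univ rb), if_pos (mem_univ rc)] at h
    have hC : s + ∑ r ∈ univ.filter (fun r : Ranking m => ¬ r b < r w), π r = n := by
      rw [hsdef, hCdef, Finset.sum_filter_add_sum_filter_not]
      rw [hndef]
      rfl
    show (∑ r, π' r) = n
    rw [h]
    omega
  -- the finalists
  have hplu_all : ∀ d : Fin m, d ≠ b → d ≠ c → plu π' d < plu π' b ∧ plu π' d < plu π' c := by
    intro d hdb hdc
    rw [hplub, hpluc]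
    by_cases hdw : d = w
    · subst hdw
      rw [hpluw]
      exact ⟨hn1, hn3⟩
    · rw [hplud d hdb hdc hdw]
      exact hn24 d hdb hdw
  have hAsub : ∀ a' ∈ univ.filter (fun c' => ∀ b', plu π' b' ≤ plu π' c'),
      a' = b ∨ a' = c := by
    intro a' ha'
    by_contra hcon
    push_neg at hcon
    obtain ⟨h1, h2⟩ := hcon
    have hall := (mem_filter.mp ha').2
    have hle := hall b
    have hlt := (hplu_all a' h1 h2).1
    omega
  have hAne : (univ.filter (fun c' => ∀ b', plu π' b' ≤ plu π' c')).Nonempty := by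
    by_cases hcx : plu π' c ≤ plu π' b
    · refine ⟨b, mem_filter.mpr ⟨mem_univ _, fun b' => ?_⟩⟩
      by_cases h1 : b' = b
      · rw [h1]
      · by_cases h2 : b' = c
        · rw [h2]; exact hcx
        · exact le_of_lt (hplu_all b' h1 h2).1
    · refine ⟨c, mem_filter.mpr ⟨mem_univ _, fun b' => ?_⟩⟩
      by_cases h1 : b' = b
      · rw [h1]; exact le_of_not_ge hcx
      · by_cases h2 : b' = c
        · rw [h2]
        · exact le_of_lt (hplu_all b' h1 h2).2
  have ha_mem := htb _ hAne
  have ha_bc := hAsub _ ha_mem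
  -- the second-round sets
  have hBb : ((univ.erase b).filter
      (fun c' => ∀ d ∈ univ.erase b, plu π' d ≤ plu π' c')) = {c} := by
    ext e
    rw [Finset.mem_singleton]
    constructor
    · intro he
      obtain ⟨he1, hall⟩ := Finset.mem_filter.mp he
      have heb := (Finset.mem_erase.mp he1).1
      by_contra hec
      have h1 := hall c (Finset.mem_erase.mpr ⟨hbc.symm, mem_univ _⟩)
      have h2 := (hplu_all e heb hec).2
      omega
    · intro he
      rw [he]
      refine Finset.mem_filter.mpr ⟨Finset.mem_erase.mpr ⟨hbc.symm, mem_univ _⟩,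
        fun d hd => ?_⟩
      have hdb := (Finset.mem_erase.mp hd).1
      by_cases hdc : d = c
      · rw [hdc]
      · exact le_of_lt (hplu_all d hdb hdc).2
  have hBc : ((univ.erase c).filter
      (fun c' => ∀ d ∈ univ.erase c, plu π' d ≤ plu π' c')) = {b} := by
    ext e
    rw [Finset.mem_singleton]
    constructor
    · intro he
      obtain ⟨he1, hall⟩ := Finset.mem_filter.mp he
      have hec := (Finset.mem_erase.mp he1).1
      by_contra heb
      have h1 := hall b (Finset.mem_erase.mpr ⟨hbc, mem_univ _⟩)
      have h2 := (hplu_all e heb hec).1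
      omega
    · intro he
      rw [he]
      refine Finset.mem_filter.mpr ⟨Finset.mem_erase.mpr ⟨hbc, mem_univ _⟩,
        fun d hd => ?_⟩
      have hdc := (Finset.mem_erase.mp hd).1
      by_cases hdb : d = b
      · rw [hdb]
      · exact le_of_lt (hplu_all d hdb hdc).1
  have htb_single : ∀ z : Fin m, tb {z} = z := by
    intro z
    have h := htb {z} (Finset.singleton_nonempty z)
    simpa using h
  have hNlt : ∑ r ∈ univ.filter (fun r : Ranking m => r c < r b), π' r
      < ∑ r ∈ univ.filter (fun r : Ranking m => r b < r c), π' r := by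
    rw [hNbc, hNcb]
    exact hn5
  have hwin : pr tb π' = b := by
    rcases ha_bc with hab | hac
    · exact pr_eq_fst tb π' b c hab hBb (htb_single c) hNlt
    · exact pr_eq_snd tb π' b c hac hBc (htb_single b) hNlt
  -- conclusion
  refine ⟨π', ?_, hnum.trans hndef, ?_⟩
  · have hCcard : 2 * C.card = m.factorial := by
      rw [hCdef]
      exact two_mul_card_lt b w hbw
    have hpos : 0 < (C \ {rb, rc}).card := by
      have h1 := Finset.le_card_sdiff ({rb, rc} : Finset (Ranking m)) C
      have h2 : ({rb, rc} : Finset (Ranking m)).card ≤ 2 :=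
        (Finset.card_insert_le _ _).trans (by simp)
      omega
    obtain ⟨r₀, hr₀⟩ := Finset.card_pos.mp hpos
    have hr₀C := (Finset.mem_sdiff.mp hr₀).1
    have hr₀n := (Finset.mem_sdiff.mp hr₀).2
    have hr₀b : r₀ ≠ rb := fun e => hr₀n (by rw [e]; exact Finset.mem_insert_self _ _)
    have hr₀c : r₀ ≠ rc := fun e => hr₀n (by rw [e]; simp)
    rw [hCdef] at hr₀C
    have hπ'r₀ : π' r₀ = 0 := hπ'_inC r₀ hr₀b hr₀c (Finset.mem_filter.mp hr₀C).2
    intro e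
    have h := congrFun e r₀
    rw [hπ'r₀] at h
    have := hn7 r₀
    omega
  · intro r hlt
    rw [hwin, ← hwdef]
    by_cases h1 : r = rb
    · exfalso
      rw [h1, hπ'_rb] at hlt
      omega
    · by_cases h2 : r = rc
      · exfalso
        rw [h2, hπ'_rc] at hlt
        omega
      · by_cases h3 : r b < r w
        · exact h3
        · exfalso
          rw [hπ'_notC r h3] at hlt
          omega

end DetCM

/-- For every `m ≥ 4` and every tie-breaking rule, the probability
under Impartial Culture with `n` voters and `m` candidates that Plurality with Runoff
is coalitionally manipulable tends to `1` as `n → ∞`. -/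
theorem limit_cm_rate_plurality_with_runoff (m : ℕ) (hm : 4 ≤ m)
    (tb : Finset (Fin m) → Fin m) (htb : IsTieBreak tb) :
    Filter.Tendsto (fun n : ℕ => icProb m n fun π => IsCM (pr tb) π)
      Filter.atTop (nhds 1) := by
  classical
  have hKfin : Fintype.card (Ranking m) = m.factorial := by
    rw [Fintype.card_perm, Fintype.card_fin]
  have hKpos : 0 < m.factorial := Nat.factorial_pos m
  have hKR : (0:ℝ) < (m.factorial:ℝ) := by exact_mod_cast hKpos
  have key : ∀ n : ℕ, 1000000 ≤ n →
      1 - (1000000 * (m.factorial:ℝ)^2) / n ≤ icProb m n (fun π => IsCM (pr tb) π) := by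
    intro n hn
    have hn0 : 0 < n := by omega
    have hnR : (0:ℝ) < (n:ℝ) := by exact_mod_cast hn0
    set Good : Finset (Fin n → Ranking m) := univ.filter (fun v => ∀ r₀ : Ranking m,
        1000 * ((Fintype.card (Ranking m) : ℤ)
          * ((univ.filter fun i => v i = r₀).card : ℤ) - n).natAbs ≤ n) with hGdef
    have hbadsub : univ \ Good ⊆ Finset.univ.biUnion (fun r₀ : Ranking m =>
        univ.filter (fun v : Fin n → Ranking m =>
          n < 1000 * ((Fintype.card (Ranking m) : ℤ)
            * ((univ.filter fun i => v i = r₀).card : ℤ) - n).natAbs)) := by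
      intro v hv
      rw [Finset.mem_sdiff, hGdef, Finset.mem_filter] at hv
      have hv2 : ¬ ∀ r₀ : Ranking m,
          1000 * ((Fintype.card (Ranking m) : ℤ)
            * ((univ.filter fun i => v i = r₀).card : ℤ) - n).natAbs ≤ n :=
        fun hall => hv.2 ⟨mem_univ _, hall⟩
      push_neg at hv2
      obtain ⟨r₀, hr₀⟩ := hv2
      exact Finset.mem_biUnion.mpr ⟨r₀, mem_univ _, Finset.mem_filter.mpr ⟨mem_univ _, hr₀⟩⟩
    have hbadcard : (univ \ Good).card * n ≤ 1000000 * m.factorial^(n+2) := by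
      calc (univ \ Good).card * n
          ≤ (∑ r₀ : Ranking m, (univ.filter (fun v : Fin n → Ranking m =>
              n < 1000 * ((Fintype.card (Ranking m) : ℤ)
                * ((univ.filter fun i => v i = r₀).card : ℤ) - n).natAbs)).card) * n :=
            Nat.mul_le_mul_right n
              ((Finset.card_le_card hbadsub).trans (Finset.card_biUnion_le))
        _ = ∑ r₀ : Ranking m, ((univ.filter (fun v : Fin n → Ranking m =>
              n < 1000 * ((Fintype.card (Ranking m) : ℤ)
                * ((univ.filter fun i => v i = r₀).card : ℤ) - n).natAbs)).card * n) :=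
            by rw [Finset.sum_mul]
        _ ≤ ∑ _r₀ : Ranking m, 1000000 * (Fintype.card (Ranking m))^(n+1) :=
            Finset.sum_le_sum (fun r₀ _ => Aux.card_bad r₀ n hn0)
        _ = 1000000 * m.factorial^(n+2) := by
            rw [Finset.sum_const, card_univ, hKfin, smul_eq_mul]
            ring
    have hGoodCM : ∀ v ∈ Good,
        IsCM (pr tb) (fun r => (univ.filter fun i => v i = r).card) := by
      intro v hv
      rw [hGdef, Finset.mem_filter] at hv
      have hν : numVoters (fun r : Ranking m => (univ.filter fun i => v i = r).card) = n := by
        unfold numVoters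
        have h := Finset.card_eq_sum_card_fiberwise
          (f := v) (s := (univ : Finset (Fin n))) (t := univ) (fun i _ => mem_univ _)
        rw [card_univ, Fintype.card_fin] at h
        exact h.symm
      apply det_CM hm tb htb _ (by rw [hν]; exact hn)
      intro r
      rw [hν]
      have h2 := hv.2 r
      rw [hKfin] at h2
      exact h2
    have hcardGood : Good ⊆ univ.filter (fun v : Fin n → Ranking m =>
        IsCM (pr tb) (fun r => (univ.filter fun i => v i = r).card)) :=
      fun v hv => Finset.mem_filter.mpr ⟨mem_univ _, hGoodCM v hv⟩
    have hic : icProb m n (fun π => IsCM (pr tb) π)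
        = ((univ.filter (fun v : Fin n → Ranking m =>
            IsCM (pr tb) (fun r => (univ.filter fun i => v i = r).card))).card : ℝ)
          / (m.factorial:ℝ)^n := by
      have h0 : icProb m n (fun π => IsCM (pr tb) π)
          = (Nat.card {v : Fin n → Ranking m // IsCM (pr tb)
              (fun r => (univ.filter fun i => v i = r).card)} : ℝ)
            / (m.factorial:ℝ)^n := rfl
      rw [h0, Nat.card_eq_fintype_card, Fintype.card_subtype]
    have hV : Fintype.card (Fin n → Ranking m) = m.factorial^n := by
      rw [Fintype.card_fun, hKfin, Fintype.card_fin]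
    have hG_le : Good.card ≤ m.factorial^n := by
      rw [← hV, ← card_univ]
      exact Finset.card_le_card (Finset.subset_univ _)
    have hsd : (univ \ Good).card = m.factorial^n - Good.card := by
      rw [Finset.card_sdiff_of_subset (Finset.subset_univ _), card_univ, hV]
    have hbadR : ((m.factorial^n - Good.card : ℕ) : ℝ) ≤ 1000000 * (m.factorial:ℝ)^(n+2) / n := by
      have h := hbadcard
      rw [hsd] at h
      have h2 : (((m.factorial^n - Good.card) * n : ℕ) : ℝ)
          ≤ ((1000000 * m.factorial^(n+2) : ℕ) : ℝ) := by exact_mod_cast h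
      push_cast at h2
      rw [le_div_iff₀ hnR]
      linarith
    have hGoodR : (m.factorial:ℝ)^n - 1000000 * (m.factorial:ℝ)^(n+2) / n ≤ (Good.card : ℝ) := by
      have hcastsub : ((m.factorial^n - Good.card : ℕ) : ℝ)
          = (m.factorial:ℝ)^n - (Good.card : ℝ) := by
        rw [Nat.cast_sub hG_le]
        push_cast
        ring
      rw [hcastsub] at hbadR
      linarith
    rw [hic]
    have hcard_le : (Good.card : ℝ) ≤ ((univ.filter (fun v : Fin n → Ranking m =>
        IsCM (pr tb) (fun r => (univ.filter fun i => v i = r).card))).card : ℝ) := by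
      exact_mod_cast Finset.card_le_card hcardGood
    have hKn : (0:ℝ) < (m.factorial:ℝ)^n := by positivity
    rw [le_div_iff₀ hKn]
    have hexp : (m.factorial:ℝ)^(n+2) = (m.factorial:ℝ)^n * (m.factorial:ℝ)^2 := by
      ring
    calc (1 - 1000000 * (m.factorial:ℝ)^2 / n) * (m.factorial:ℝ)^n
        = (m.factorial:ℝ)^n - 1000000 * (m.factorial:ℝ)^(n+2) / n := by
          rw [hexp]
          ring
      _ ≤ (Good.card : ℝ) := hGoodR
      _ ≤ _ := hcard_le
  have key2 : ∀ n : ℕ, icProb m n (fun π => IsCM (pr tb) π) ≤ 1 := by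
    intro n
    have h0 : icProb m n (fun π => IsCM (pr tb) π)
        = (Nat.card {v : Fin n → Ranking m // IsCM (pr tb)
            (fun r => (univ.filter fun i => v i = r).card)} : ℝ)
          / (m.factorial:ℝ)^n := rfl
    rw [h0]
    have hKn : (0:ℝ) < (m.factorial:ℝ)^n := by positivity
    rw [div_le_one hKn]
    have h1 : Nat.card {v : Fin n → Ranking m // IsCM (pr tb)
        (fun r => (univ.filter fun i => v i = r).card)} ≤ m.factorial^n := by
      rw [Nat.card_eq_fintype_card]
      calc Fintype.card {v : Fin n → Ranking m // IsCM (pr tb)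
          (fun r => (univ.filter fun i => v i = r).card)}
          ≤ Fintype.card (Fin n → Ranking m) := Fintype.card_subtype_le _
        _ = m.factorial^n := by rw [Fintype.card_fun, hKfin, Fintype.card_fin]
    calc (Nat.card {v : Fin n → Ranking m // IsCM (pr tb)
        (fun r => (univ.filter fun i => v i = r).card)} : ℝ)
        ≤ ((m.factorial^n : ℕ) : ℝ) := by exact_mod_cast h1
      _ = (m.factorial:ℝ)^n := by push_cast; ring
  have hlim : Filter.Tendsto (fun n : ℕ => 1 - (1000000 * (m.factorial:ℝ)^2) / n)
      Filter.atTop (nhds 1) := by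
    have h := tendsto_const_div_atTop_nhds_zero_nat (1000000 * (m.factorial:ℝ)^2)
    have h2 := Filter.Tendsto.const_sub 1 h
    simpa using h2
  apply tendsto_of_tendsto_of_tendsto_of_le_of_le' hlim tendsto_const_nhds
  · filter_upwards [Filter.eventually_ge_atTop 1000000] with n hn using key n hn
  · filter_upwards with n using key2 n
end

section
/- For every integer m ≥ 4 and every tie-breaking rule, there exist ε > 0 and an integer N such that for every n > N, every profile with n voters and m candidates whose normalized vector (n_r/n)_{r∈ℛ} lies within L1-distance ε of the uniform vector (1/m!,…,1/m!) is coalitionally manipulable under Plurality with Runoff; moreover, for every candidate a different from the Plurality-with-Runoff winner, there is a manipulation after which a is the winner. -/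
open Finset

/-- swap the positions of `a` and `b` in the ranking `r`. -/
def swapPos {m : ℕ} (a b : Fin m) (r : Ranking m) : Ranking m :=
  r.trans (Equiv.swap (r a) (r b))

lemma swapPos_apply_left {m : ℕ} (a b : Fin m) (r : Ranking m) :
    swapPos a b r a = r b := by simp [swapPos]

lemma swapPos_apply_right {m : ℕ} (a b : Fin m) (r : Ranking m) :
    swapPos a b r b = r a := by simp [swapPos]

lemma swapPos_apply_other {m : ℕ} (a b : Fin m) (r : Ranking m) (c : Fin m)
    (hca : c ≠ a) (hcb : c ≠ b) : swapPos a b r c = r c := by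
  simp only [swapPos, Equiv.trans_apply]
  exact Equiv.swap_apply_of_ne_of_ne (fun h => hca (r.injective h))
    (fun h => hcb (r.injective h))

lemma swapPos_swapPos {m : ℕ} (a b : Fin m) (r : Ranking m) :
    swapPos a b (swapPos a b r) = r := by
  ext c
  simp only [swapPos, Equiv.trans_apply, Equiv.swap_apply_left, Equiv.swap_apply_right]
  rw [Equiv.swap_comm, Equiv.swap_apply_self]

/-- cardinality transfer along `swapPos`. -/
lemma card_filter_swapPos {m : ℕ} (a b : Fin m)
    (P Q : Ranking m → Prop) [DecidablePred P] [DecidablePred Q]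
    (h : ∀ r, P r ↔ Q (swapPos a b r)) :
    (univ.filter P).card = (univ.filter Q).card := by
  refine Finset.card_nbij' (swapPos a b) (swapPos a b) ?_ ?_ ?_ ?_
  · intro r hr
    simp only [mem_coe, mem_filter, mem_univ, true_and] at hr ⊢
    exact (h r).mp hr
  · intro s hs
    simp only [mem_coe, mem_filter, mem_univ, true_and] at hs ⊢
    have := h (swapPos a b s)
    rw [swapPos_swapPos] at this
    exact this.mpr hs
  · intro r _; exact swapPos_swapPos a b r
  · intro s _; exact swapPos_swapPos a b s

/-- cardinality transfer along post-composition with a fixed swap. -/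
lemma card_filter_trans_swap {m : ℕ} (j j' : Fin m)
    (P Q : Ranking m → Prop) [DecidablePred P] [DecidablePred Q]
    (h : ∀ r, P r ↔ Q (r.trans (Equiv.swap j j'))) :
    (univ.filter P).card = (univ.filter Q).card := by
  refine Finset.card_nbij' (fun r => r.trans (Equiv.swap j j'))
    (fun s => s.trans (Equiv.swap j j')) ?_ ?_ ?_ ?_
  · intro r hr
    simp only [mem_coe, mem_filter, mem_univ, true_and] at hr ⊢
    exact (h r).mp hr
  · intro s hs
    simp only [mem_coe, mem_filter, mem_univ, true_and] at hs ⊢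
    have := h (s.trans (Equiv.swap j j'))
    have h2 : (s.trans (Equiv.swap j j')).trans (Equiv.swap j j') = s := by
      ext c; simp [Equiv.trans_apply]
    rw [h2] at this
    exact this.mpr hs
  · intro r _; ext c; simp [Equiv.trans_apply]
  · intro s _; ext c; simp [Equiv.trans_apply]

lemma not_lt_rank {m : ℕ} (r : Ranking m) (a w : Fin m) (haw : a ≠ w) :
    ¬ (r a < r w) ↔ r w < r a := by
  have hne : r w ≠ r a := fun h => haw (r.injective h.symm)
  exact ⟨fun h => hne.lt_or_gt.resolve_right h, fun h h' => absurd h' (asymm h)⟩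

lemma card_half {m : ℕ} (a w : Fin m) (haw : a ≠ w) :
    2 * (univ.filter fun r : Ranking m => r a < r w).card = m.factorial := by
  have h1 : (univ.filter fun r : Ranking m => r a < r w).card
      = (univ.filter fun r : Ranking m => r w < r a).card := by
    apply card_filter_swapPos a w
    intro r
    rw [swapPos_apply_left, swapPos_apply_right]
  have h2 := Finset.card_filter_add_card_filter_not
    (s := (univ : Finset (Ranking m))) (p := fun r => r a < r w)
  have h3 : (univ.filter fun r : Ranking m => ¬ (r a < r w)).card
      = (univ.filter fun r : Ranking m => r w < r a).card := by
    congr 1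
    apply Finset.filter_congr
    intro r _
    exact not_lt_rank r a w haw
  have h4 : (univ : Finset (Ranking m)).card = m.factorial := by
    simp [Fintype.card_perm]
  omega

lemma card_fiber {m : ℕ} (c : Fin m) (j : Fin m) :
    m * (univ.filter fun r : Ranking m => r c = j).card = m.factorial := by
  have key : ∀ j' : Fin m, (univ.filter fun r : Ranking m => r c = j').card
      = (univ.filter fun r : Ranking m => r c = j).card := by
    intro j'
    apply card_filter_trans_swap j' j
    intro r
    simp only [Equiv.trans_apply]
    constructor
    · intro h; rw [h]; simp
    · intro h
      have : Equiv.swap j' j (r c) = Equiv.swap j' j j' := by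
        rw [h]; simp
      exact (Equiv.swap j' j).injective this
  have hpart : ∑ j' : Fin m, (univ.filter fun r : Ranking m => r c = j').card
      = (univ : Finset (Ranking m)).card := by
    rw [Finset.card_eq_sum_card_fiberwise (f := fun r : Ranking m => r c)
      (t := univ) (fun x _ => mem_univ _)]
  have h4 : (univ : Finset (Ranking m)).card = m.factorial := by
    simp [Fintype.card_perm]
  rw [h4] at hpart
  rw [← hpart]
  rw [Finset.sum_congr rfl (fun j' _ => key j')]
  simp [mul_comm]

lemma card_fiber_half {m : ℕ} (c a w : Fin m) (hca : c ≠ a) (hcw : c ≠ w) (haw : a ≠ w)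
    (j : Fin m) :
    2 * m * (univ.filter fun r : Ranking m => r c = j ∧ r w < r a).card = m.factorial := by
  have h1 : (univ.filter fun r : Ranking m => r c = j ∧ r w < r a).card
      = (univ.filter fun r : Ranking m => r c = j ∧ r a < r w).card := by
    apply card_filter_swapPos a w
    intro r
    rw [swapPos_apply_left, swapPos_apply_right,
      swapPos_apply_other a w r c hca hcw]
  have h2 := Finset.card_filter_add_card_filter_not
    (s := univ.filter fun r : Ranking m => r c = j) (p := fun r => r a < r w)
  rw [Finset.filter_filter, Finset.filter_filter] at h2
  have h3 : (univ.filter fun r : Ranking m => r c = j ∧ ¬ (r a < r w)).card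
      = (univ.filter fun r : Ranking m => r c = j ∧ r w < r a).card := by
    congr 1
    apply Finset.filter_congr
    intro r _
    rw [not_lt_rank r a w haw]
  have h5 : (univ.filter fun r : Ranking m => r c = j).card
      = 2 * (univ.filter fun r : Ranking m => r c = j ∧ r w < r a).card := by omega
  calc 2 * m * (univ.filter fun r : Ranking m => r c = j ∧ r w < r a).card
      = m * (2 * (univ.filter fun r : Ranking m => r c = j ∧ r w < r a).card) := by ring
    _ = m * (univ.filter fun r : Ranking m => r c = j).card := by rw [← h5]
    _ = m.factorial := card_fiber c j

lemma card_last {m : ℕ} (a b w : Fin m) (hab : a ≠ b) (haw : a ≠ w) (hbw : b ≠ w) :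
    3 * (univ.filter fun r : Ranking m => r b < r a ∧ r w < r a).card = m.factorial := by
  have e12 : (univ.filter fun r : Ranking m => r b < r a ∧ r w < r a).card
      = (univ.filter fun r : Ranking m => r a < r b ∧ r w < r b).card := by
    apply card_filter_swapPos a b
    intro r
    rw [swapPos_apply_left, swapPos_apply_right,
      swapPos_apply_other a b r w haw.symm hbw.symm]
  have e13 : (univ.filter fun r : Ranking m => r b < r a ∧ r w < r a).card
      = (univ.filter fun r : Ranking m => r a < r w ∧ r b < r w).card := by
    apply card_filter_swapPos a w
    intro r
    rw [swapPos_apply_left, swapPos_apply_right,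
      swapPos_apply_other a w r b hab.symm hbw]
    tauto
  have hpart : (univ.filter fun r : Ranking m => r b < r a ∧ r w < r a).card
      + (univ.filter fun r : Ranking m => r a < r b ∧ r w < r b).card
      + (univ.filter fun r : Ranking m => r a < r w ∧ r b < r w).card
      = (univ : Finset (Ranking m)).card := by
    simp only [Finset.card_filter, Finset.card_univ, ← Finset.sum_add_distrib]
    rw [Finset.sum_congr rfl (g := fun _ => 1) ?_]
    · simp [Finset.card_univ, mul_comm]
    intro r _
    have d1 : (r a).val ≠ (r b).val := fun h => hab (r.injective (Fin.ext h))
    have d2 : (r a).val ≠ (r w).val := fun h => haw (r.injective (Fin.ext h))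
    have d3 : (r b).val ≠ (r w).val := fun h => hbw (r.injective (Fin.ext h))
    simp only [Fin.lt_def]
    split_ifs <;> omega
  have h4 : (univ : Finset (Ranking m)).card = m.factorial := by
    simp [Fintype.card_perm]
  omega

lemma card_mid {m : ℕ} (a b w : Fin m) (hab : a ≠ b) (haw : a ≠ w) (hbw : b ≠ w) :
    6 * (univ.filter fun r : Ranking m => r w < r a ∧ r a < r b).card = m.factorial := by
  -- the six order classes
  set c1 := (univ.filter fun r : Ranking m => r w < r a ∧ r a < r b).card with hc1
  set c2 := (univ.filter fun r : Ranking m => r w < r b ∧ r b < r a).card with hc2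
  set c3 := (univ.filter fun r : Ranking m => r a < r w ∧ r w < r b).card with hc3
  set c4 := (univ.filter fun r : Ranking m => r b < r a ∧ r a < r w).card with hc4
  set c5 := (univ.filter fun r : Ranking m => r b < r w ∧ r w < r a).card with hc5
  set c6 := (univ.filter fun r : Ranking m => r a < r b ∧ r b < r w).card with hc6
  have e12 : c1 = c2 := by
    rw [hc1, hc2]
    apply card_filter_swapPos a b
    intro r
    rw [swapPos_apply_left, swapPos_apply_right,
      swapPos_apply_other a b r w haw.symm hbw.symm]
  have e13 : c1 = c3 := by
    rw [hc1, hc3]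
    apply card_filter_swapPos a w
    intro r
    rw [swapPos_apply_left, swapPos_apply_right,
      swapPos_apply_other a w r b hab.symm hbw]
  have e14 : c1 = c4 := by
    rw [hc1, hc4]
    apply card_filter_swapPos b w
    intro r
    rw [swapPos_apply_left, swapPos_apply_right,
      swapPos_apply_other b w r a hab haw]
  have e25 : c2 = c5 := by
    rw [hc2, hc5]
    apply card_filter_swapPos b w
    intro r
    rw [swapPos_apply_left, swapPos_apply_right,
      swapPos_apply_other b w r a hab haw]
  have e36 : c3 = c6 := by
    rw [hc3, hc6]
    apply card_filter_swapPos b w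
    intro r
    rw [swapPos_apply_left, swapPos_apply_right,
      swapPos_apply_other b w r a hab haw]
  have hpart : c1 + c2 + c3 + c4 + c5 + c6 = (univ : Finset (Ranking m)).card := by
    rw [hc1, hc2, hc3, hc4, hc5, hc6]
    simp only [Finset.card_filter, ← Finset.sum_add_distrib]
    rw [Finset.sum_congr rfl (g := fun _ => 1) ?_]
    · simp [Finset.card_univ, mul_comm]
    intro r _
    have d1 : (r a).val ≠ (r b).val := fun h => hab (r.injective (Fin.ext h))
    have d2 : (r a).val ≠ (r w).val := fun h => haw (r.injective (Fin.ext h))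
    have d3 : (r b).val ≠ (r w).val := fun h => hbw (r.injective (Fin.ext h))
    simp only [Fin.lt_def]
    split_ifs <;> omega
  have h4 : (univ : Finset (Ranking m)).card = m.factorial := by
    simp [Fintype.card_perm]
  omega

/-- The manipulated profile. -/
def modProfile {m : ℕ} (π : Profile m) (a w : Fin m) (rstar rb : Ranking m)
    (K K2 : ℕ) : Profile m :=
  fun r => if r = rstar then K - K2 else if r = rb then K2
    else if r a < r w then 0 else π r

lemma sum_modProfile {m : ℕ} (π : Profile m) (a w : Fin m) (rstar rb : Ranking m)
    (K K2 : ℕ) (hne : rstar ≠ rb) (h1 : rstar a < rstar w) (h2 : rb a < rb w)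
    (A : Finset (Ranking m)) :
    ∑ r ∈ A, modProfile π a w rstar rb K K2 r
      = (if rstar ∈ A then K - K2 else 0) + (if rb ∈ A then K2 else 0)
        + ∑ r ∈ A.filter (fun r => ¬ (r a < r w)), π r := by
  have hpt : ∀ r, modProfile π a w rstar rb K K2 r
      = (if r = rstar then K - K2 else 0) + (if r = rb then K2 else 0)
        + (if ¬ (r a < r w) then π r else 0) := by
    intro r
    unfold modProfile
    by_cases e1 : r = rstar
    · subst e1
      simp [hne, h1]
    · by_cases e2 : r = rb
      · subst e2
        simp [e1, h2]
      · by_cases e3 : r a < r w <;> simp [e1, e2, e3]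
  rw [Finset.sum_congr rfl (fun r _ => hpt r), Finset.sum_add_distrib,
    Finset.sum_add_distrib]
  congr 1
  · congr 1
    · exact Finset.sum_ite_eq' A rstar (fun _ => K - K2)
    · exact Finset.sum_ite_eq' A rb (fun _ => K2)
  · exact (Finset.sum_filter _ _).symm

lemma first_iff {m : ℕ} (hm0 : 0 < m) (c : Fin m) (r : Ranking m) :
    (∀ d ∈ (univ : Finset (Fin m)), d ≠ c → r c < r d) ↔ r c = ⟨0, hm0⟩ := by
  constructor
  · intro h
    by_contra hne
    have hd : r (r.symm ⟨0, hm0⟩) = ⟨0, hm0⟩ := r.apply_symm_apply _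
    have hdc : r.symm ⟨0, hm0⟩ ≠ c := by
      intro e; rw [e] at hd; exact hne hd
    have := h _ (mem_univ _) hdc
    rw [hd] at this
    simp [Fin.lt_def] at this
  · intro h d _ hdc
    have hne : r d ≠ ⟨0, hm0⟩ := by
      rw [← h]; exact fun e => hdc (r.injective e)
    have : (r d).val ≠ 0 := fun e => hne (Fin.ext e)
    rw [h]
    simp only [Fin.lt_def]
    omega

lemma bound_aux {m n : ℕ} (π : Profile m) (hnR : (0:ℝ) < n)
    (hL1 : (∑ r : Ranking m, |(π r : ℝ) / (n : ℝ) - 1 / (m.factorial : ℝ)|) ≤ 1/10000)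
    (k : ℕ) (A : Finset (Ranking m)) (hk : 0 < k) (hkA : k * A.card = m.factorial) :
    |(∑ r ∈ A, (π r : ℝ)) - (n : ℝ) / k| ≤ (n : ℝ) / 10000 := by
  have hF0 : 0 < m.factorial := Nat.factorial_pos m
  have hFR : (0:ℝ) < m.factorial := by exact_mod_cast hF0
  have hdev1 : ∑ r : Ranking m, |(π r : ℝ) - n / m.factorial| ≤ n / 10000 := by
    have hpt : ∀ r : Ranking m, |(π r : ℝ) - n / m.factorial|
        = n * |(π r : ℝ) / n - 1 / m.factorial| := by
      intro r
      have h1 : (n:ℝ) * ((π r : ℝ) / n - 1 / m.factorial)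
          = (π r : ℝ) - n / m.factorial := by field_simp
      rw [← h1, abs_mul, abs_of_pos hnR]
    rw [Finset.sum_congr rfl (fun r _ => hpt r), ← Finset.mul_sum]
    calc (n:ℝ) * ∑ r : Ranking m, |(π r : ℝ) / n - 1 / m.factorial|
        ≤ n * (1/10000) := by
          apply mul_le_mul_of_nonneg_left hL1 (le_of_lt hnR)
      _ = n / 10000 := by ring
  have hsum_dev : |(∑ r ∈ A, (π r : ℝ)) - n * A.card / m.factorial| ≤ n / 10000 := by
    have h1 : (∑ r ∈ A, ((π r : ℝ) - n / m.factorial))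
        = (∑ r ∈ A, (π r : ℝ)) - n * A.card / m.factorial := by
      rw [Finset.sum_sub_distrib, Finset.sum_const, nsmul_eq_mul]
      ring
    rw [← h1]
    calc |∑ r ∈ A, ((π r : ℝ) - n / m.factorial)|
        ≤ ∑ r ∈ A, |(π r : ℝ) - n / m.factorial| :=
          Finset.abs_sum_le_sum_abs _ _
      _ ≤ ∑ r : Ranking m, |(π r : ℝ) - n / m.factorial| :=
          Finset.sum_le_sum_of_subset_of_nonneg (Finset.subset_univ A)
            (fun r _ _ => abs_nonneg _)
      _ ≤ n / 10000 := hdev1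
  have hc0 : 0 < A.card := by
    rcases Nat.eq_zero_or_pos A.card with h | h
    · rw [h, mul_zero] at hkA; omega
    · exact h
  have heq : (n:ℝ) * A.card / m.factorial = n / k := by
    have hFr : (m.factorial:ℝ) = (k:ℝ) * (A.card : ℝ) := by exact_mod_cast hkA.symm
    rw [hFr]
    have hkR : (0:ℝ) < k := by exact_mod_cast hk
    have hcR : (0:ℝ) < A.card := by exact_mod_cast hc0
    field_simp
  rw [← heq]
  exact hsum_dev

set_option maxHeartbeats 2000000 in
lemma main_aux {m : ℕ} (hm : 4 ≤ m) (tb : Finset (Fin m) → Fin m) (htb : IsTieBreak tb)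
    (n : ℕ) (hn : 10^6 < n) (π : Profile m) (hπn : numVoters π = n)
    (hL1 : (∑ r : Ranking m, |(π r : ℝ) / (n : ℝ) - 1 / (m.factorial : ℝ)|) ≤ 1/10000)
    (a w : Fin m) (haw : a ≠ w) :
    ∃ π' : Profile m, π' ≠ π ∧ numVoters π' = numVoters π ∧
      (∀ r : Ranking m, π' r < π r → r a < r w) ∧ pr tb π' = a := by
  have hm0 : 0 < m := by omega
  set F := m.factorial with hF
  have hF24 : 24 ≤ F := by
    have : Nat.factorial 4 ≤ m.factorial := Nat.factorial_le hm
    simpa [Nat.factorial] using this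
  have hF0 : 0 < F := Nat.factorial_pos m
  -- pick a third candidate b
  have hnotsub : ¬ (univ : Finset (Fin m)) ⊆ {a, w} := by
    intro h
    have h1 := Finset.card_le_card h
    have h2 : ({a, w} : Finset (Fin m)).card ≤ 2 :=
      le_trans (Finset.card_insert_le _ _) (by simp)
    rw [Finset.card_univ, Fintype.card_fin] at h1
    omega
  obtain ⟨b, -, hbmem⟩ := Finset.not_subset.mp hnotsub
  simp only [Finset.mem_insert, Finset.mem_singleton, not_or] at hbmem
  obtain ⟨hba, hbw⟩ := hbmem
  -- the two special rankings
  set i0 : Fin m := ⟨0, hm0⟩ with hi0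
  set i1 : Fin m := ⟨1, by omega⟩ with hi1
  have hi01 : i0 ≠ i1 := by simp [hi0, hi1, Fin.ext_iff]
  set rstar : Ranking m := Equiv.swap i0 a with hrstar
  set rb : Ranking m := (Equiv.swap i0 b).trans
    (Equiv.swap i1 (Equiv.swap i0 b a)) with hrb
  have h_rstar_a : rstar a = i0 := Equiv.swap_apply_right i0 a
  have h_rb_b : rb b = i0 := by
    rw [hrb]
    simp only [Equiv.trans_apply, Equiv.swap_apply_right]
    apply Equiv.swap_apply_of_ne_of_ne hi01
    intro h
    apply hba
    have h2 : Equiv.swap i0 b a = Equiv.swap i0 b b := by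
      rw [← h, Equiv.swap_apply_right]
    exact ((Equiv.swap i0 b).injective h2).symm
  have h_rb_a : rb a = i1 := by
    rw [hrb]
    simp only [Equiv.trans_apply, Equiv.swap_apply_right]
  have hpos : ∀ j : Fin m, j ≠ i0 → i0 < j := by
    intro j hj
    have : j.val ≠ 0 := fun h => hj (by simp [hi0, Fin.ext_iff, h])
    simp only [Fin.lt_def, hi0]
    omega
  have hpos1 : ∀ j : Fin m, j ≠ i0 → j ≠ i1 → i1 < j := by
    intro j hj0 hj1
    have h0 : j.val ≠ 0 := fun h => hj0 (by simp [hi0, Fin.ext_iff, h])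
    have h1 : j.val ≠ 1 := fun h => hj1 (by simp [hi1, Fin.ext_iff, h])
    simp only [Fin.lt_def, hi1]
    omega
  have h_rstar_T : rstar a < rstar w := by
    rw [h_rstar_a]
    apply hpos
    intro h
    exact haw (rstar.injective (by rw [h_rstar_a, h])).symm
  have h_rb_T : rb a < rb w := by
    rw [h_rb_a]
    apply hpos1
    · intro h
      exact hbw (rb.injective (by rw [h_rb_b, h])).symm
    · intro h
      exact haw (rb.injective (by rw [h_rb_a, h])).symm
  have h_ne : rstar ≠ rb := by
    intro h
    apply hi01
    rw [← h_rstar_a, ← h_rb_a, h]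
  -- the manipulated profile
  set K := ∑ r ∈ univ.filter (fun r : Ranking m => r a < r w), π r with hK
  set K2 := 2 * K / 7 with hK2def
  have h7K2 : 7 * K2 ≤ 2 * K := by
    rw [hK2def, mul_comm]
    exact Nat.div_mul_le_self _ _
  have hK2' : 2 * K ≤ 7 * K2 + 6 := by
    have h1 := Nat.div_add_mod (2 * K) 7
    have h2 : (2 * K) % 7 < 7 := Nat.mod_lt _ (by norm_num)
    omega
  have hK2K : K2 ≤ K := by omega
  set π' := modProfile π a w rstar rb K K2 with hπ'
  have hmaster := sum_modProfile π a w rstar rb K K2 h_ne h_rstar_T h_rb_T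
  -- number of voters is preserved
  have hNV : numVoters π' = numVoters π := by
    show ∑ r, π' r = numVoters π
    rw [hπ', hmaster univ]
    simp only [Finset.mem_univ, if_pos]
    have hsp := Finset.sum_filter_add_sum_filter_not univ
      (fun r : Ranking m => r a < r w) π
    unfold numVoters
    omega
  -- only voters preferring a to w change their ballot
  have hdec : ∀ r : Ranking m, π' r < π r → r a < r w := by
    intro r h
    by_cases e1 : r = rstar
    · subst e1; exact h_rstar_T
    · by_cases e2 : r = rb
      · subst e2; exact h_rb_T
      · by_cases e3 : r a < r w
        · exact e3
        · exfalso
          rw [hπ'] at h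
          unfold modProfile at h
          rw [if_neg e1, if_neg e2, if_neg e3] at h
          omega
  -- score computations
  have hplu_eq : ∀ (σ : Profile m) (c : Fin m), plu σ c
      = ∑ r ∈ univ.filter (fun r : Ranking m => ∀ d ∈ univ, d ≠ c → r c < r d), σ r :=
    fun σ c => rfl
  have hmem : ∀ (c : Fin m) (r : Ranking m),
      r ∈ univ.filter (fun r : Ranking m => ∀ d ∈ univ, d ≠ c → r c < r d)
        ↔ r c = i0 := by
    intro c r
    rw [Finset.mem_filter]
    constructor
    · intro h; exact (first_iff hm0 c r).mp h.2
    · intro h; exact ⟨Finset.mem_univ _, (first_iff hm0 c r).mpr h⟩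
  have hfilterP : ∀ c : Fin m,
      univ.filter (fun r : Ranking m => ∀ d ∈ univ, d ≠ c → r c < r d)
        = univ.filter (fun r : Ranking m => r c = i0) := by
    intro c
    ext r
    rw [hmem c r, Finset.mem_filter]
    simp
  -- membership of the special rankings in first-place sets
  have h_rstar_mem : ∀ c : Fin m,
      rstar ∈ univ.filter (fun r : Ranking m => r c = i0) ↔ c = a := by
    intro c
    rw [Finset.mem_filter]
    simp only [Finset.mem_univ, true_and]
    constructor
    · intro h; exact rstar.injective (by rw [h, h_rstar_a])
    · intro h; rw [h, h_rstar_a]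
  have h_rb_mem : ∀ c : Fin m,
      rb ∈ univ.filter (fun r : Ranking m => r c = i0) ↔ c = b := by
    intro c
    rw [Finset.mem_filter]
    simp only [Finset.mem_univ, true_and]
    constructor
    · intro h; exact rb.injective (by rw [h, h_rb_b])
    · intro h; rw [h, h_rb_b]
  -- plurality score of a
  have hplua : plu π' a = K - K2 := by
    rw [hplu_eq, hfilterP, hπ', hmaster]
    rw [if_pos ((h_rstar_mem a).mpr rfl)]
    rw [if_neg (fun h => hba ((h_rb_mem a).mp h).symm)]
    have h3 : ∑ r ∈ (univ.filter (fun r : Ranking m => r a = i0)).filter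
        (fun r => ¬ (r a < r w)), π r = 0 := by
      apply Finset.sum_eq_zero
      intro r hr
      rw [Finset.filter_filter, Finset.mem_filter] at hr
      exfalso
      apply hr.2.2
      rw [hr.2.1]
      apply hpos
      intro h
      exact haw (r.injective (by rw [hr.2.1, h]))
    rw [h3]
    omega
  -- plurality score of b
  set B := ∑ r ∈ univ.filter (fun r : Ranking m => r b = i0 ∧ ¬ (r a < r w)), π r
    with hB
  have hplub : plu π' b = K2 + B := by
    rw [hplu_eq, hfilterP, hπ', hmaster]
    rw [if_neg (fun h => hba ((h_rstar_mem b).mp h))]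
    rw [if_pos ((h_rb_mem b).mpr rfl)]
    rw [Finset.filter_filter, hB]
    omega
  -- plurality score of any other candidate
  have hplu_other : ∀ c : Fin m, c ≠ a → c ≠ b → plu π' c
      = ∑ r ∈ univ.filter (fun r : Ranking m => r c = i0 ∧ ¬ (r a < r w)), π r := by
    intro c hca hcb
    rw [hplu_eq, hfilterP, hπ', hmaster]
    rw [if_neg (fun h => hca ((h_rstar_mem c).mp h))]
    rw [if_neg (fun h => hcb ((h_rb_mem c).mp h))]
    rw [Finset.filter_filter]
    omega
  -- runoff pairwise sums
  have h_rstar_ab : rstar a < rstar b := by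
    rw [h_rstar_a]
    apply hpos
    intro h
    exact hba (rstar.injective (by rw [h_rstar_a, h]))
  have h_rb_ba : rb b < rb a := by
    rw [h_rb_b, h_rb_a]
    exact hpos i1 hi01.symm
  set A1 := ∑ r ∈ univ.filter (fun r : Ranking m => r a < r b ∧ ¬ (r a < r w)), π r
    with hA1
  set A2 := ∑ r ∈ univ.filter (fun r : Ranking m => r b < r a ∧ ¬ (r a < r w)), π r
    with hA2
  have hnab : ∑ r ∈ univ.filter (fun r : Ranking m => r a < r b), π' r
      = (K - K2) + A1 := by
    rw [hπ', hmaster]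
    rw [if_pos (Finset.mem_filter.mpr ⟨Finset.mem_univ _, h_rstar_ab⟩ :
      rstar ∈ univ.filter (fun r : Ranking m => r a < r b))]
    rw [if_neg (fun h : rb ∈ univ.filter (fun r : Ranking m => r a < r b) =>
      absurd (Finset.mem_filter.mp h).2 (asymm h_rb_ba))]
    rw [Finset.filter_filter, hA1]
    omega
  have hnba : ∑ r ∈ univ.filter (fun r : Ranking m => r b < r a), π' r
      = K2 + A2 := by
    rw [hπ', hmaster]
    rw [if_neg (fun h : rstar ∈ univ.filter (fun r : Ranking m => r b < r a) =>
      absurd (Finset.mem_filter.mp h).2 (asymm h_rstar_ab))]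
    rw [if_pos (Finset.mem_filter.mpr ⟨Finset.mem_univ _, h_rb_ba⟩ :
      rb ∈ univ.filter (fun r : Ranking m => r b < r a))]
    rw [Finset.filter_filter, hA2]
    omega
  set W := ∑ r ∈ univ.filter (fun r : Ranking m => r w = i0 ∧ ¬ (r a < r w)), π r
    with hW
  have hpluw : plu π' w = W := hplu_other w (Ne.symm haw) (Ne.symm hbw)
  -- real bounds
  have hn0 : 0 < n := by omega
  have hnR : (0:ℝ) < n := by exact_mod_cast hn0
  have hFR : (0:ℝ) < F := by exact_mod_cast hF0
  have hbound : ∀ (k : ℕ) (A : Finset (Ranking m)), 0 < k → k * A.card = F →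
      |(∑ r ∈ A, (π r : ℝ)) - (n:ℝ) / k| ≤ (n:ℝ) / 10000 :=
    fun k A hk hkA => bound_aux π hnR hL1 k A hk hkA
  -- specific bounds
  have hKcast : (K:ℝ) = ∑ r ∈ univ.filter (fun r : Ranking m => r a < r w), (π r:ℝ) := by
    rw [hK]; exact Nat.cast_sum _ _
  have hKb : |(K:ℝ) - n/2| ≤ (n:ℝ)/10000 := by
    rw [hKcast]
    have h := hbound 2 _ (by norm_num) (card_half a w haw)
    norm_num at h
    exact h
  have hWb : |(W:ℝ) - (n:ℝ)/m| ≤ (n:ℝ)/10000 := by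
    have hset : univ.filter (fun r : Ranking m => r w = i0 ∧ ¬ (r a < r w))
        = univ.filter (fun r : Ranking m => r w = i0) := by
      apply Finset.filter_congr
      intro r _
      simp only [and_iff_left_iff_imp]
      intro h hlt
      rw [h, hi0] at hlt
      simp [Fin.lt_def] at hlt
    have hcast : (W:ℝ) = ∑ r ∈ univ.filter (fun r : Ranking m => r w = i0), (π r:ℝ) := by
      rw [hW, hset]; exact Nat.cast_sum _ _
    rw [hcast]
    exact hbound m _ hm0 (card_fiber w i0)
  have hBb : |(B:ℝ) - (n:ℝ)/(2*(m:ℝ))| ≤ (n:ℝ)/10000 := by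
    have hset : univ.filter (fun r : Ranking m => r b = i0 ∧ ¬ (r a < r w))
        = univ.filter (fun r : Ranking m => r b = i0 ∧ r w < r a) := by
      apply Finset.filter_congr
      intro r _
      rw [not_lt_rank r a w haw]
    have hcast : (B:ℝ)
        = ∑ r ∈ univ.filter (fun r : Ranking m => r b = i0 ∧ r w < r a), (π r:ℝ) := by
      rw [hB, hset]; exact Nat.cast_sum _ _
    rw [hcast]
    have h := hbound (2*m) _ (by omega) (card_fiber_half b a w hba hbw haw i0)
    have h2 : ((2*m : ℕ):ℝ) = 2*(m:ℝ) := by push_cast; ring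
    rw [h2] at h
    exact h
  have hCb : ∀ c : Fin m, c ≠ a → c ≠ b → c ≠ w →
      |((plu π' c : ℕ):ℝ) - (n:ℝ)/(2*(m:ℝ))| ≤ (n:ℝ)/10000 := by
    intro c hca hcb hcw
    rw [hplu_other c hca hcb]
    have hset : univ.filter (fun r : Ranking m => r c = i0 ∧ ¬ (r a < r w))
        = univ.filter (fun r : Ranking m => r c = i0 ∧ r w < r a) := by
      apply Finset.filter_congr
      intro r _
      rw [not_lt_rank r a w haw]
    rw [hset, Nat.cast_sum]
    have h := hbound (2*m) _ (by omega) (card_fiber_half c a w hca hcw haw i0)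
    have h2 : ((2*m : ℕ):ℝ) = 2*(m:ℝ) := by push_cast; ring
    rw [h2] at h
    exact h
  have hA1b : |(A1:ℝ) - (n:ℝ)/6| ≤ (n:ℝ)/10000 := by
    have hset : univ.filter (fun r : Ranking m => r a < r b ∧ ¬ (r a < r w))
        = univ.filter (fun r : Ranking m => r w < r a ∧ r a < r b) := by
      apply Finset.filter_congr
      intro r _
      rw [not_lt_rank r a w haw]
      exact and_comm
    have hcast : (A1:ℝ)
        = ∑ r ∈ univ.filter (fun r : Ranking m => r w < r a ∧ r a < r b), (π r:ℝ) := by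
      rw [hA1, hset]; exact Nat.cast_sum _ _
    rw [hcast]
    have h := hbound 6 _ (by norm_num) (card_mid a b w (Ne.symm hba) haw hbw)
    norm_num at h
    exact h
  have hA2b : |(A2:ℝ) - (n:ℝ)/3| ≤ (n:ℝ)/10000 := by
    have hset : univ.filter (fun r : Ranking m => r b < r a ∧ ¬ (r a < r w))
        = univ.filter (fun r : Ranking m => r b < r a ∧ r w < r a) := by
      apply Finset.filter_congr
      intro r _
      rw [not_lt_rank r a w haw]
    have hcast : (A2:ℝ)
        = ∑ r ∈ univ.filter (fun r : Ranking m => r b < r a ∧ r w < r a), (π r:ℝ) := by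
      rw [hA2, hset]; exact Nat.cast_sum _ _
    rw [hcast]
    have h := hbound 3 _ (by norm_num) (card_last a b w (Ne.symm hba) haw hbw)
    norm_num at h
    exact h
  have hrstarb : (π rstar : ℝ) ≤ (n:ℝ)/24 + (n:ℝ)/10000 := by
    have h := hbound F {rstar} hF0 (by simp)
    rw [Finset.sum_singleton, abs_le] at h
    have h2 : (n:ℝ)/F ≤ (n:ℝ)/24 := by
      apply div_le_div_of_nonneg_left (le_of_lt hnR) (by norm_num)
      exact_mod_cast hF24
    linarith [h.2]
  rw [abs_le] at hKb hWb hBb hA1b hA2b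
  -- numeric inequalities
  have h7K2R : 7*(K2:ℝ) ≤ 2*(K:ℝ) := by exact_mod_cast h7K2
  have hK2R' : 2*(K:ℝ) ≤ 7*(K2:ℝ) + 6 := by exact_mod_cast hK2'
  have hmR : (4:ℝ) ≤ (m:ℝ) := by exact_mod_cast hm
  have hXle : (n:ℝ)/(2*(m:ℝ)) ≤ (n:ℝ)/8 := by
    apply div_le_div_of_nonneg_left (le_of_lt hnR) (by norm_num)
    linarith
  have hWX : (n:ℝ)/(m:ℝ) = 2*((n:ℝ)/(2*(m:ℝ))) := by
    have hm0R : (m:ℝ) ≠ 0 := by linarith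
    field_simp
  have hnBig : (1000000:ℝ) < n := by exact_mod_cast hn
  have ineq1 : K2 + B < K - K2 := by
    have h : ((K2 + B:ℕ):ℝ) < ((K - K2:ℕ):ℝ) := by
      push_cast [Nat.cast_sub hK2K]
      linarith [hKb.1, hKb.2, hBb.1, hBb.2, hXle]
    exact_mod_cast h
  have ineq2 : W < K2 + B := by
    have h : ((W:ℕ):ℝ) < ((K2 + B:ℕ):ℝ) := by
      push_cast
      linarith [hKb.1, hWb.2, hBb.1, hXle]
    exact_mod_cast h
  have ineq3 : ∀ c : Fin m, c ≠ a → c ≠ b → c ≠ w → plu π' c < K2 + B := by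
    intro c hca hcb hcw
    have hc := hCb c hca hcb hcw
    rw [abs_le] at hc
    have h : ((plu π' c:ℕ):ℝ) < ((K2 + B:ℕ):ℝ) := by
      push_cast
      linarith [hKb.1, hBb.1, hc.2]
    exact_mod_cast h
  have ineq4 : K2 + A2 < (K - K2) + A1 := by
    have h : ((K2 + A2:ℕ):ℝ) < ((K - K2 + A1:ℕ):ℝ) := by
      push_cast [Nat.cast_sub hK2K]
      linarith [hKb.1, hA1b.1, hA2b.2]
    exact_mod_cast h
  have ineq_ne : π' ≠ π := by
    intro h
    have h1 : π' rstar = K - K2 := by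
      rw [hπ']; unfold modProfile; rw [if_pos rfl]
    have h2 : (π rstar:ℝ) < ((K - K2:ℕ):ℝ) := by
      rw [Nat.cast_sub hK2K]
      linarith [hKb.1, hrstarb]
    have h3 : π rstar = K - K2 := by rw [← h, h1]
    rw [h3] at h2
    exact lt_irrefl _ h2
  -- winner determination
  have hother_lt : ∀ c : Fin m, c ≠ a → c ≠ b → plu π' c < plu π' b := by
    intro c hca hcb
    rw [hplub]
    by_cases hcw : c = w
    · subst hcw
      rw [hpluw]
      exact ineq2
    · exact ineq3 c hca hcb hcw
  have hb_lt_a : plu π' b < plu π' a := by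
    rw [hplua, hplub]; exact ineq1
  have hmax : ∀ c : Fin m, c ≠ a → plu π' c < plu π' a := by
    intro c hca
    by_cases hcb : c = b
    · subst hcb; exact hb_lt_a
    · exact lt_trans (hother_lt c hca hcb) hb_lt_a
  have hSa : (univ.filter fun c => ∀ d, plu π' d ≤ plu π' c) = {a} := by
    ext c
    rw [Finset.mem_filter, Finset.mem_singleton]
    constructor
    · rintro ⟨-, h⟩
      by_contra hca
      exact absurd (h a) (not_le.mpr (hmax c hca))
    · intro h
      rw [h]
      refine ⟨Finset.mem_univ _, ?_⟩
      intro d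
      by_cases hda : d = a
      · rw [hda]
      · exact le_of_lt (hmax d hda)
  have hSb : ((univ.erase a).filter
      fun c => ∀ d ∈ univ.erase a, plu π' d ≤ plu π' c) = {b} := by
    ext c
    constructor
    · intro hc
      rw [Finset.mem_filter, Finset.mem_erase] at hc
      obtain ⟨⟨hca, -⟩, h⟩ := hc
      rw [Finset.mem_singleton]
      by_contra hcb
      have hb' := h b (by rw [Finset.mem_erase]; exact ⟨hba, Finset.mem_univ _⟩)
      exact absurd hb' (not_le.mpr (hother_lt c hca hcb))
    · intro hc
      rw [Finset.mem_singleton] at hc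
      rw [Finset.mem_filter, Finset.mem_erase, hc]
      refine ⟨⟨hba, Finset.mem_univ _⟩, ?_⟩
      intro d hd
      rw [Finset.mem_erase] at hd
      by_cases hdb : d = b
      · rw [hdb]
      · exact le_of_lt (hother_lt d hd.1 hdb)
  have hta : tb {a} = a := by
    have := htb {a} (Finset.singleton_nonempty a)
    simpa using this
  have htbb : tb {b} = b := by
    have := htb {b} (Finset.singleton_nonempty b)
    simpa using this
  have hprres : pr tb π' = a := by
    unfold pr
    simp only [hSa, hta, hSb, htbb]
    rw [hnab, hnba]
    rw [if_pos ineq4]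
  exact ⟨π', ineq_ne, hNV, hdec, hprres⟩


/-- For every `m ≥ 4` and every tie-breaking rule, there are `ε > 0`
and `N` such that for every `n > N`, every profile with `n` voters whose normalized
vector is within `L¹`-distance `ε` of the uniform vector is coalitionally manipulable
under Plurality with Runoff; moreover, for each candidate `a` other than the winner,
there is a manipulation making `a` the winner. -/
theorem pr_manipulable_near_uniform (m : ℕ) (hm : 4 ≤ m)
    (tb : Finset (Fin m) → Fin m) (htb : IsTieBreak tb) :
    ∃ ε : ℝ, 0 < ε ∧ ∃ N : ℕ, ∀ n : ℕ, N < n → ∀ π : Profile m, numVoters π = n →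
      (∑ r : Ranking m, |(π r : ℝ) / (n : ℝ) - 1 / (m.factorial : ℝ)|) ≤ ε →
      IsCM (pr tb) π ∧
        ∀ a : Fin m, a ≠ pr tb π →
          ∃ π' : Profile m, π' ≠ π ∧ numVoters π' = numVoters π ∧
            (∀ r : Ranking m, π' r < π r → r (pr tb π') < r (pr tb π)) ∧
            pr tb π' = a := by
  refine ⟨1/10000, by norm_num, 10^6, ?_⟩
  intro n hn π hπn hL1
  have hm0 : 0 < m := by omega
  constructor
  · have hex : ∃ a : Fin m, a ≠ pr tb π := by
      by_cases h : pr tb π = ⟨0, hm0⟩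
      · exact ⟨⟨1, by omega⟩, by rw [h]; simp [Fin.ext_iff]⟩
      · exact ⟨⟨0, hm0⟩, fun h2 => h h2.symm⟩
    obtain ⟨a, haw⟩ := hex
    obtain ⟨π', hne, hNV, hdec, hpr⟩ := main_aux hm tb htb n hn π hπn hL1 a (pr tb π) haw
    refine ⟨π', hne, hNV, fun r hr => ?_⟩
    rw [hpr]
    exact hdec r hr
  · intro a ha
    obtain ⟨π', hne, hNV, hdec, hpr⟩ := main_aux hm tb htb n hn π hπn hL1 a (pr tb π) ha
    refine ⟨π', hne, hNV, fun r hr => ?_, hpr⟩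
    rw [hpr]
    exact hdec r hr
end

section
/- For every integer m ≥ 2 and every real δ ∈ (0, 1), there exists a constant C (depending only on m and δ) such that every profile with n > C voters and m candidates satisfying |n_r − n/m!| < n^δ for every ranking r, and in which the IRV winner strongly violates the SCW condition, is coalitionally manipulable under IRV, regardless of the tie-breaking rule used. -/
open Finset

/-- `c` strongly violates the SCW condition in `π`: for some subset `S ∋ c` with
`|S| ≥ 2`, we have `n_{c ⪰ S} ≤ (n − (|S| − 1)) / |S|`. -/
def StronglyViolates {m : ℕ} (π : Profile m) (c : Fin m) : Prop :=
  ∃ S : Finset (Fin m), c ∈ S ∧ 2 ≤ S.card ∧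
    (score π c S : ℝ) ≤ ((numVoters π : ℝ) - ((S.card : ℝ) - 1)) / (S.card : ℝ)

namespace ManipAux
variable {m : ℕ}

def Tops (x : Fin m) (U : Finset (Fin m)) : Finset (Ranking m) :=
  Finset.univ.filter (fun r : Ranking m => ∀ b ∈ U, b ≠ x → r x < r b)

lemma score_eq (π : Profile m) (x : Fin m) (U : Finset (Fin m)) :
    score π x U = ∑ r ∈ Tops x U, π r := rfl

def CLast (c : Fin m) : Finset (Ranking m) :=
  Finset.univ.filter (fun r : Ranking m => ∀ b, b ≠ c → r b < r c)

lemma mem_tops {x : Fin m} {U : Finset (Fin m)} {r : Ranking m} :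
    r ∈ Tops x U ↔ ∀ b ∈ U, b ≠ x → r x < r b := by simp [Tops]

lemma mem_clast {c : Fin m} {r : Ranking m} :
    r ∈ CLast c ↔ ∀ b, b ≠ c → r b < r c := by simp [CLast]

/-- swapping two members of `U` gives a bijection between tops-sets. -/
lemma tops_swap {x y : Fin m} {U : Finset (Fin m)} (hx : x ∈ U) (hy : y ∈ U)
    {r : Ranking m} (hr : r ∈ Tops x U) : (Equiv.swap x y).trans r ∈ Tops y U := by
  rcases eq_or_ne x y with rfl | hxy
  · simpa using hr
  rw [mem_tops] at hr ⊢
  intro b hb hby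
  simp only [Equiv.trans_apply, Equiv.swap_apply_right]
  rcases eq_or_ne b x with rfl | hbx
  · rw [Equiv.swap_apply_left]
    exact hr y hy (Ne.symm hxy)
  · rw [Equiv.swap_apply_of_ne_of_ne hbx hby]
    exact hr b hb hbx

lemma clast_swap {x y c : Fin m} (hxc : x ≠ c) (hyc : y ≠ c)
    {r : Ranking m} (hr : r ∈ CLast c) : (Equiv.swap x y).trans r ∈ CLast c := by
  rw [mem_clast] at hr ⊢
  intro b hb
  have h1 : (Equiv.swap x y) c = c := Equiv.swap_apply_of_ne_of_ne (Ne.symm hxc) (Ne.symm hyc)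
  simp only [Equiv.trans_apply, h1]
  exact hr _ (fun h => hb (by rw [← h1] at h; exact (Equiv.swap x y).injective h))

lemma card_tops_eq {x y : Fin m} (U : Finset (Fin m)) (hx : x ∈ U) (hy : y ∈ U) :
    (Tops x U).card = (Tops y U).card := by
  apply Finset.card_bij' (fun r _ => (Equiv.swap x y).trans r)
      (fun r _ => (Equiv.swap y x).trans r)
  · intro r hr; exact tops_swap hx hy hr
  · intro r hr; exact tops_swap hy hx hr
  · intro r _; ext z; simp [Equiv.swap_comm x y]
  · intro r _; ext z; simp [Equiv.swap_comm x y]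

lemma card_tops_inter_clast_eq {x y c : Fin m} (U : Finset (Fin m)) (hx : x ∈ U) (hy : y ∈ U)
    (hxc : x ≠ c) (hyc : y ≠ c) :
    (Tops x U ∩ CLast c).card = (Tops y U ∩ CLast c).card := by
  apply Finset.card_bij' (fun r _ => (Equiv.swap x y).trans r)
      (fun r _ => (Equiv.swap y x).trans r)
  · intro r hr
    rw [Finset.mem_inter] at hr ⊢
    exact ⟨tops_swap hx hy hr.1, clast_swap hxc hyc hr.2⟩
  · intro r hr
    rw [Finset.mem_inter] at hr ⊢
    exact ⟨tops_swap hy hx hr.1, clast_swap hyc hxc hr.2⟩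
  · intro r _; ext z; simp [Equiv.swap_comm x y]
  · intro r _; ext z; simp [Equiv.swap_comm x y]

lemma card_tops_le (x : Fin m) (U : Finset (Fin m)) : (Tops x U).card ≤ m.factorial := by
  calc (Tops x U).card ≤ (Finset.univ : Finset (Ranking m)).card := Finset.card_le_univ _
  _ = m.factorial := by simp [Finset.card_univ, Fintype.card_perm]

/-- explicit ranking putting `x` first and `c` last -/
def rho (hm : 0 < m) (x c : Fin m) : Ranking m :=
  (Equiv.swap x ⟨0, hm⟩).trans
    (Equiv.swap ((Equiv.swap x ⟨0, hm⟩) c) ⟨m - 1, by omega⟩)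

lemma rho_apply_x (hm : 0 < m) (hm2 : 2 ≤ m) {x c : Fin m} (hxc : x ≠ c) :
    rho hm x c x = ⟨0, hm⟩ := by
  have hp : (Equiv.swap x ⟨0, hm⟩) c ≠ ⟨0, hm⟩ := by
    intro h
    apply hxc
    have := (Equiv.swap x ⟨0, hm⟩).injective (a₁ := c) (a₂ := x)
    exact (this (by rw [h, Equiv.swap_apply_left])).symm
  have hl : (⟨0, hm⟩ : Fin m) ≠ ⟨m - 1, by omega⟩ := by
    intro h; rw [Fin.mk.injEq] at h; omega
  simp only [rho, Equiv.trans_apply, Equiv.swap_apply_left]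
  exact Equiv.swap_apply_of_ne_of_ne (Ne.symm hp) hl

lemma rho_apply_c (hm : 0 < m) {x c : Fin m} :
    rho hm x c c = ⟨m - 1, by omega⟩ := by
  simp only [rho, Equiv.trans_apply, Equiv.swap_apply_left]

lemma rho_mem_tops (hm : 0 < m) (hm2 : 2 ≤ m) {x c : Fin m} (hxc : x ≠ c)
    (U : Finset (Fin m)) : rho hm x c ∈ Tops x U := by
  rw [mem_tops]
  intro b _ hbx
  rw [rho_apply_x hm hm2 hxc]
  rw [Fin.lt_def]
  show 0 < (rho hm x c b).val
  have : rho hm x c b ≠ ⟨0, hm⟩ := by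
    intro h
    exact hbx ((rho hm x c).injective (by rw [h, rho_apply_x hm hm2 hxc]))
  have : (rho hm x c b).val ≠ 0 := fun hv => this (Fin.ext hv)
  omega

lemma rho_mem_clast (hm : 0 < m) {x c : Fin m} : rho hm x c ∈ CLast c := by
  rw [mem_clast]
  intro b hb
  rw [rho_apply_c hm, Fin.lt_def]
  have h1 : rho hm x c b ≠ ⟨m - 1, by omega⟩ := by
    intro h
    exact hb ((rho hm x c).injective (by rw [h, rho_apply_c hm]))
  have h2 : (rho hm x c b).val ≠ m - 1 := fun hv => h1 (Fin.ext hv)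
  have h3 := (rho hm x c b).isLt
  show (rho hm x c b).val < m - 1
  omega

lemma one_le_card_tops_inter (hm : 0 < m) (hm2 : 2 ≤ m) {x c : Fin m} (hxc : x ≠ c)
    (U : Finset (Fin m)) : 1 ≤ (Tops x U ∩ CLast c).card := by
  rw [Finset.one_le_card]
  exact ⟨rho hm x c, Finset.mem_inter.mpr ⟨rho_mem_tops hm hm2 hxc U, rho_mem_clast hm⟩⟩

/-- tops-sets partition the voters -/
lemma sum_score_eq (ν : Profile m) (U : Finset (Fin m)) (hU : U.Nonempty) :
    ∑ x ∈ U, score ν x U = numVoters ν := by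
  simp only [score_eq, Tops, Finset.sum_filter]
  rw [Finset.sum_comm]
  unfold numVoters
  apply Finset.sum_congr rfl
  intro r _
  obtain ⟨x₀, hx₀, hmin⟩ := U.exists_min_image r hU
  rw [Finset.sum_eq_single x₀]
  · rw [if_pos]
    intro b hb hbx
    exact lt_of_le_of_ne (hmin b hb) (fun h => hbx (r.injective h).symm)
  · intro x hx hxx
    rw [if_neg]
    intro hP
    exact absurd (hP x₀ hx₀ (Ne.symm hxx)) (not_lt.mpr (hmin x hx))
  · intro h; exact absurd hx₀ h

end ManipAux

namespace ManipAux
variable {m : ℕ}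

theorem irvAux_mem {tb : Finset (Fin m) → Fin m} (htb : IsTieBreak tb) (π : Profile m) :
    ∀ U : Finset (Fin m), U.Nonempty → irvAux tb π U ∈ U := by
  intro U
  induction U using Finset.strongInduction with
  | _ U ih =>
    intro hU
    rw [irvAux]
    by_cases h1 : U.card ≤ 1
    · rw [if_pos h1]; exact htb U hU
    · rw [if_neg h1]
      set F := U.filter fun c => ∀ b ∈ U, score π c U ≤ score π b U with hF
      show (if he : tb F ∈ U then irvAux tb π (U.erase (tb F)) else tb U) ∈ U
      by_cases he : tb F ∈ U
      · rw [dif_pos he]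
        have hne : (U.erase (tb F)).Nonempty := by
          rw [← Finset.card_pos, Finset.card_erase_of_mem he]; omega
        exact Finset.mem_of_mem_erase (ih _ (Finset.erase_ssubset he) hne)
      · rw [dif_neg he]; exact htb U hU

/-- Main dynamics lemma: if `c` has strictly minimal score within `S`, and on every
strictly larger set all members of `S` strictly beat all outsiders, then the IRV process
started at any `U ⊇ S` produces a winner in `S.erase c`. -/
theorem irv_ind {tb : Finset (Fin m) → Fin m} (htb : IsTieBreak tb) (π : Profile m)
    (S : Finset (Fin m)) (c : Fin m) (hc : c ∈ S) (hs2 : 2 ≤ S.card)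
    (hS : ∀ x ∈ S, x ≠ c → score π c S < score π x S)
    (hU : ∀ U, S ⊆ U → ∀ t ∈ U, t ∉ S → ∀ w ∈ S, score π t U < score π w U) :
    ∀ U : Finset (Fin m), S ⊆ U → irvAux tb π U ∈ S.erase c := by
  intro U
  induction U using Finset.strongInduction with
  | _ U ih =>
    intro hSU
    have hcard : 2 ≤ U.card := le_trans hs2 (Finset.card_le_card hSU)
    rw [irvAux]
    rw [if_neg (by omega)]
    set F := U.filter fun z => ∀ b ∈ U, score π z U ≤ score π b U with hF
    show (if he : tb F ∈ U then irvAux tb π (U.erase (tb F)) else tb U) ∈ S.erase c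
    rcases eq_or_ne U S with rfl | hne
    · -- at the bottleneck set: the filter is exactly {c}
      have hFc : F = {c} := by
        ext z
        rw [hF, Finset.mem_filter, Finset.mem_singleton]
        constructor
        · rintro ⟨hz, hmin⟩
          by_contra hzc
          exact absurd (hmin c hc) (not_le.mpr (hS z hz hzc))
        · intro hz
          subst hz
          refine ⟨hc, fun b hb => ?_⟩
          rcases eq_or_ne b z with rfl | hbc
          · exact le_refl _
          · exact le_of_lt (hS b hb hbc)
      have htbF : tb F = c := by
        have h := htb F (by rw [hFc]; exact Finset.singleton_nonempty c)
        rw [hFc] at h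
        rw [hFc]
        exact Finset.mem_singleton.mp h
      rw [htbF, dif_pos hc]
      apply irvAux_mem htb
      rw [← Finset.card_pos, Finset.card_erase_of_mem hc]; omega
    · -- strictly larger set: the eliminated candidate is outside S
      have hssub : S ⊂ U := lt_of_le_of_ne hSU (Ne.symm hne)
      obtain ⟨t, htU, htS⟩ := Finset.exists_of_ssubset hssub
      have hFne : F.Nonempty := by
        obtain ⟨z, hz, hmin⟩ := U.exists_min_image (fun z => score π z U) ⟨t, htU⟩
        exact ⟨z, Finset.mem_filter.mpr ⟨hz, hmin⟩⟩
      have hFsub : ∀ z ∈ F, z ∉ S := by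
        intro z hz hzS
        rw [hF, Finset.mem_filter] at hz
        exact absurd (hz.2 t htU) (not_le.mpr (hU U hSU t htU htS z hzS))
      have he : tb F ∈ U := Finset.mem_of_mem_filter _ (htb F hFne)
      have heS : tb F ∉ S := hFsub _ (htb F hFne)
      rw [dif_pos he]
      exact ih (U.erase (tb F)) (Finset.erase_ssubset he)
        (Finset.subset_erase.mpr ⟨hSU, fun h => heS h⟩)

end ManipAux

namespace ManipAux
variable {m : ℕ}

lemma sum_lb {π : Profile m} {μ ε : ℝ} (h : ∀ r : Ranking m, |(π r : ℝ) - μ| < ε)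
    (F : Finset (Ranking m)) : (F.card : ℝ) * (μ - ε) ≤ ((∑ r ∈ F, π r : ℕ) : ℝ) := by
  push_cast
  calc (F.card : ℝ) * (μ - ε) = ∑ _r ∈ F, (μ - ε) := by rw [Finset.sum_const, nsmul_eq_mul]
  _ ≤ ∑ r ∈ F, (π r : ℝ) :=
    Finset.sum_le_sum (fun r _ => by have := abs_lt.mp (h r); linarith [this.1])

lemma sum_ub {π : Profile m} {μ ε : ℝ} (h : ∀ r : Ranking m, |(π r : ℝ) - μ| < ε)
    (F : Finset (Ranking m)) : ((∑ r ∈ F, π r : ℕ) : ℝ) ≤ (F.card : ℝ) * (μ + ε) := by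
  push_cast
  calc ∑ r ∈ F, (π r : ℝ) ≤ ∑ _r ∈ F, (μ + ε) :=
    Finset.sum_le_sum (fun r _ => by have := abs_lt.mp (h r); linarith [this.2])
  _ = (F.card : ℝ) * (μ + ε) := by rw [Finset.sum_const, nsmul_eq_mul]

lemma exists_const (δ : ℝ) (hδ0 : 0 < δ) (hδ1 : δ < 1) (B : ℝ) (hB : 1 ≤ B) :
    ∃ C : ℝ, 1 ≤ C ∧ ∀ x : ℝ, C < x → B * x ^ δ < x := by
  refine ⟨max 1 ((B + 1) ^ (1 / (1 - δ))), le_max_left _ _, ?_⟩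
  intro x hx
  have hx1 : (1 : ℝ) < x := lt_of_le_of_lt (le_max_left _ _) hx
  have h1δ : (0 : ℝ) < 1 - δ := by linarith
  have h2 : (B + 1) ^ ((1 / (1 - δ)) * (1 - δ)) < x ^ (1 - δ) := by
    rw [Real.rpow_mul (by linarith)]
    exact Real.rpow_lt_rpow (Real.rpow_nonneg (by linarith) _)
      (lt_of_le_of_lt (le_max_right _ _) hx) h1δ
  rw [one_div, inv_mul_cancel₀ (ne_of_gt h1δ), Real.rpow_one] at h2
  have hxpos : (0 : ℝ) < x := by linarith
  have hxd : (0 : ℝ) < x ^ δ := Real.rpow_pos_of_pos hxpos δ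
  have hsplit : x ^ δ * x ^ (1 - δ) = x := by
    rw [← Real.rpow_add hxpos]; norm_num
  calc B * x ^ δ < (B + 1) * x ^ δ := by nlinarith
  _ ≤ x ^ (1 - δ) * x ^ δ := by nlinarith
  _ = x := by rw [mul_comm]; exact hsplit

end ManipAux

set_option maxHeartbeats 1000000

/-- manipulation lemma. For every `m ≥ 2` and `δ ∈ (0,1)`, there is a
constant `C` (depending only on `m` and `δ`) such that every profile with `n > C`
voters satisfying `|n_r − n/m!| < n^δ` for all rankings `r`, and whose IRV winner
strongly violates the SCW condition, is coalitionally manipulable in IRV, regardless of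
the tie-breaking rule used. -/
theorem manipulation_lemma (m : ℕ) (hm : 2 ≤ m) (δ : ℝ) (hδ : δ ∈ Set.Ioo (0:ℝ) 1) :
    ∃ C : ℝ, ∀ n : ℕ, C < (n : ℝ) → ∀ π : Profile m, numVoters π = n →
      (∀ r : Ranking m, |(π r : ℝ) - (n : ℝ) / (m.factorial : ℝ)| < (n : ℝ) ^ δ) →
      ∀ tb : Finset (Fin m) → Fin m, IsTieBreak tb →
        StronglyViolates π (irv tb π) → IsCM (irv tb) π := by
  classical
  obtain ⟨hδ0, hδ1⟩ := hδ
  have hm0 : 0 < m := by omega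
  have hmf1 : (1:ℝ) ≤ (m.factorial : ℝ) := by
    exact_mod_cast Nat.one_le_iff_ne_zero.mpr (Nat.factorial_ne_zero m)
  obtain ⟨C₀, hC₀1, hC₀⟩ := ManipAux.exists_const δ hδ0 hδ1 (8 * (m.factorial:ℝ)^2)
    (by nlinarith)
  refine ⟨max (m:ℝ) C₀, ?_⟩
  intro n hn π hπn hnear tb htb hviol
  have hnm : (m:ℝ) < n := lt_of_le_of_lt (le_max_left _ _) hn
  have hnm' : m ≤ n := by exact_mod_cast hnm.le
  have hn0 : (0:ℝ) < n := lt_of_le_of_lt (by positivity) hnm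
  have hmaster : 8 * (m.factorial:ℝ)^2 * (n:ℝ)^δ < n :=
    hC₀ n (lt_of_le_of_lt (le_max_right _ _) hn)
  set μ : ℝ := (n:ℝ) / (m.factorial : ℝ) with hμdef
  set ε : ℝ := (n:ℝ) ^ δ with hεdef
  have hmf0 : (0:ℝ) < (m.factorial : ℝ) := by linarith
  have hε0 : (0:ℝ) ≤ ε := Real.rpow_nonneg (Nat.cast_nonneg n) δ
  have hμε : 8 * (m.factorial:ℝ) * ε < μ := by
    rw [hμdef, lt_div_iff₀ hmf0]
    nlinarith [hmaster]
  have hμ0 : (0:ℝ) < μ := lt_of_le_of_lt (by positivity) hμε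
  set c := irv tb π with hcdef
  obtain ⟨S, hcS, hs2, hqre⟩ := hviol
  rw [hπn] at hqre
  set q := score π c S with hqdef
  have hSe_ne : (S.erase c).Nonempty := by
    rw [← Finset.card_pos, Finset.card_erase_of_mem hcS]; omega
  obtain ⟨a, haSe⟩ := hSe_ne
  have hacS : a ∈ S := Finset.mem_of_mem_erase haSe
  have hac : a ≠ c := (Finset.mem_erase.mp haSe).1
  set K := ∑ r ∈ ManipAux.CLast c, π r with hKdef
  obtain ⟨π₀, hπ₀⟩ : ∃ f : Profile m, ∀ r, f r =
      if r ∈ ManipAux.CLast c then 0 else π r := ⟨_, fun _ => rfl⟩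
  obtain ⟨Cf, hCf⟩ : ∃ f : Fin m → ℕ, ∀ x, f x = q + 1 - score π₀ x S := ⟨_, fun _ => rfl⟩
  set L : ℕ := K - ∑ x ∈ S.erase c, Cf x with hLdef
  obtain ⟨A, hA⟩ : ∃ f : Fin m → ℕ, ∀ x, f x = Cf x + if x = a then L else 0 :=
    ⟨_, fun _ => rfl⟩
  obtain ⟨π', hπ'⟩ : ∃ f : Profile m, ∀ r, f r =
      if r ∈ ManipAux.CLast c then
        ∑ x ∈ S.erase c, (if r = ManipAux.rho hm0 x c then A x else 0)
      else π r := ⟨_, fun _ => rfl⟩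
  -- sum bounds
  have hub := ManipAux.sum_ub hnear
  have hlb := ManipAux.sum_lb hnear
  -- voter splitting
  have hsplit : ∀ ν : Profile m, numVoters ν =
      ∑ r ∈ ManipAux.CLast c, ν r + ∑ r ∈ Finset.univ \ ManipAux.CLast c, ν r := by
    intro ν
    unfold numVoters
    rw [← Finset.sum_inter_add_sum_sdiff Finset.univ (ManipAux.CLast c) ν, Finset.univ_inter]
  have hKn : numVoters π₀ + K = n := by
    have h1 : ∑ r ∈ ManipAux.CLast c, π₀ r = 0 :=
      Finset.sum_eq_zero fun r hr => by rw [hπ₀ r, if_pos hr]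
    have h2 : ∑ r ∈ Finset.univ \ ManipAux.CLast c, π₀ r
        = ∑ r ∈ Finset.univ \ ManipAux.CLast c, π r :=
      Finset.sum_congr rfl fun r hr => by rw [hπ₀ r, if_neg (Finset.mem_sdiff.mp hr).2]
    have h3 := hsplit π₀
    have h4 := hsplit π
    rw [h1, h2] at h3
    rw [hπn, ← hKdef] at h4
    omega
  -- the modified profile's sums on subsets of CLast
  have key_alloc : ∀ F : Finset (Ranking m), F ⊆ ManipAux.CLast c →
      ∑ r ∈ F, π' r = ∑ y ∈ S.erase c, (if ManipAux.rho hm0 y c ∈ F then A y else 0) := by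
    intro F hF
    rw [Finset.sum_congr rfl (fun r hr => by rw [hπ' r, if_pos (hF hr)])]
    rw [Finset.sum_comm]
    exact Finset.sum_congr rfl fun y _ => by simp
  have hrho_not : ∀ (y x : Fin m) (U : Finset (Fin m)), y ∈ U → y ≠ x → y ≠ c →
      ManipAux.rho hm0 y c ∉ ManipAux.Tops x U := by
    intro y x U hyU hyx hyc hmem
    have h := ManipAux.mem_tops.mp hmem y hyU hyx
    rw [ManipAux.rho_apply_x hm0 hm hyc] at h
    exact Nat.not_lt_zero _ h
  have hD_sum : ∀ (x : Fin m) (U : Finset (Fin m)),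
      score π₀ x U = ∑ r ∈ ManipAux.Tops x U \ ManipAux.CLast c, π r := by
    intro x U
    rw [ManipAux.score_eq,
      ← Finset.sum_inter_add_sum_sdiff (ManipAux.Tops x U) (ManipAux.CLast c) π₀]
    rw [Finset.sum_eq_zero (fun r hr => by rw [hπ₀ r, if_pos (Finset.mem_inter.mp hr).2]),
      zero_add]
    exact Finset.sum_congr rfl fun r hr => by rw [hπ₀ r, if_neg (Finset.mem_sdiff.mp hr).2]
  have hTopsC : ∀ (U : Finset (Fin m)), S ⊆ U →
      ∀ r ∈ ManipAux.Tops c U, r ∉ ManipAux.CLast c := by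
    intro U hSU r hr hcl
    exact lt_asymm (ManipAux.mem_tops.mp hr a (hSU hacS) hac)
      (ManipAux.mem_clast.mp hcl a hac)
  have hscoreπ'c : ∀ U : Finset (Fin m), S ⊆ U → score π' c U = score π c U := by
    intro U hSU
    rw [ManipAux.score_eq, ManipAux.score_eq]
    exact Finset.sum_congr rfl fun r hr => by rw [hπ' r, if_neg (hTopsC U hSU r hr)]
  have hscoreπ₀c : ∀ U : Finset (Fin m), S ⊆ U → score π₀ c U = score π c U := by
    intro U hSU
    rw [ManipAux.score_eq, ManipAux.score_eq]
    exact Finset.sum_congr rfl fun r hr => by rw [hπ₀ r, if_neg (hTopsC U hSU r hr)]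
  have hcards : ∀ (x : Fin m) (U : Finset (Fin m)), x ≠ c →
      1 ≤ (ManipAux.Tops x U ∩ ManipAux.CLast c).card ∧
      (ManipAux.Tops x U \ ManipAux.CLast c).card
        + (ManipAux.Tops x U ∩ ManipAux.CLast c).card = (ManipAux.Tops x U).card ∧
      (ManipAux.Tops x U).card ≤ m.factorial := by
    intro x U hxc
    exact ⟨ManipAux.one_le_card_tops_inter hm0 hm hxc U,
      Finset.card_sdiff_add_card_inter _ _, ManipAux.card_tops_le x U⟩
  have hq_lb : ((ManipAux.Tops c S).card : ℝ) * (μ - ε) ≤ (q:ℝ) := by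
    have hq' : q = ∑ r ∈ ManipAux.Tops c S, π r := by rw [hqdef, ManipAux.score_eq]
    rw [hq']
    exact hlb _
  -- E1 : the non-coalition score of any x ∈ S \ {c} is below q
  have hDlt : ∀ x ∈ S.erase c, score π₀ x S < q := by
    intro x hxSe
    have hxc : x ≠ c := (Finset.mem_erase.mp hxSe).1
    have hxS : x ∈ S := Finset.mem_of_mem_erase hxSe
    obtain ⟨hM1, hdMN, hNm⟩ := hcards x S hxc
    have hNN : (ManipAux.Tops x S).card = (ManipAux.Tops c S).card :=
      ManipAux.card_tops_eq S hxS hcS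
    have hD_ub : ((score π₀ x S : ℕ):ℝ)
        ≤ ((ManipAux.Tops x S \ ManipAux.CLast c).card : ℝ) * (μ + ε) := by
      rw [hD_sum]; exact hub _
    have hdMN' : ((ManipAux.Tops x S \ ManipAux.CLast c).card : ℝ)
        + ((ManipAux.Tops x S ∩ ManipAux.CLast c).card : ℝ)
        = ((ManipAux.Tops c S).card : ℝ) := by rw [← hNN]; exact_mod_cast hdMN
    have hM1' : (1:ℝ) ≤ ((ManipAux.Tops x S ∩ ManipAux.CLast c).card : ℝ) := by
      exact_mod_cast hM1
    have hNm' : ((ManipAux.Tops c S).card : ℝ) ≤ (m.factorial : ℝ) := by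
      rw [← hNN]; exact_mod_cast hNm
    have hreal : ((score π₀ x S : ℕ):ℝ) < (q:ℝ) := by
      nlinarith [hD_ub, hq_lb, hdMN', hM1', hNm', hε0, hμ0, hμε,
        mul_nonneg hε0 (by linarith : (0:ℝ) ≤ (m.factorial:ℝ))]
    exact_mod_cast hreal
  have hCfD : ∀ x ∈ S.erase c, Cf x + score π₀ x S = q + 1 := by
    intro x hx
    have := hDlt x hx
    rw [hCf x]
    omega
  -- E3 : lower bound on coalition allocation
  have hCflb : ∀ x ∈ S.erase c, μ - 3 * (m.factorial:ℝ) * ε ≤ (Cf x : ℝ) := by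
    intro x hxSe
    have hxc : x ≠ c := (Finset.mem_erase.mp hxSe).1
    have hxS : x ∈ S := Finset.mem_of_mem_erase hxSe
    obtain ⟨hM1, hdMN, hNm⟩ := hcards x S hxc
    have hNN : (ManipAux.Tops x S).card = (ManipAux.Tops c S).card :=
      ManipAux.card_tops_eq S hxS hcS
    have hD_ub : ((score π₀ x S : ℕ):ℝ)
        ≤ ((ManipAux.Tops x S \ ManipAux.CLast c).card : ℝ) * (μ + ε) := by
      rw [hD_sum]; exact hub _
    have hdMN' : ((ManipAux.Tops x S \ ManipAux.CLast c).card : ℝ)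
        + ((ManipAux.Tops x S ∩ ManipAux.CLast c).card : ℝ)
        = ((ManipAux.Tops c S).card : ℝ) := by rw [← hNN]; exact_mod_cast hdMN
    have hM1' : (1:ℝ) ≤ ((ManipAux.Tops x S ∩ ManipAux.CLast c).card : ℝ) := by
      exact_mod_cast hM1
    have hNm' : ((ManipAux.Tops c S).card : ℝ) ≤ (m.factorial : ℝ) := by
      rw [← hNN]; exact_mod_cast hNm
    have hCfcast : (Cf x : ℝ) + ((score π₀ x S : ℕ):ℝ) = (q:ℝ) + 1 := by
      exact_mod_cast hCfD x hxSe
    nlinarith [hD_ub, hq_lb, hdMN', hM1', hNm', hε0, hμ0, hμε, hCfcast]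
  -- E4 : sum of non-coalition scores
  have hsumD : (∑ x ∈ S.erase c, score π₀ x S) + q = numVoters π₀ := by
    have h1 := ManipAux.sum_score_eq π₀ S ⟨c, hcS⟩
    rw [← Finset.sum_erase_add S _ hcS] at h1
    rw [hscoreπ₀c S (Finset.Subset.refl S), ← hqdef] at h1
    exact h1
  -- E5 : the strong violation inequality, in ℕ
  have hsq : S.card * q + S.card ≤ n + 1 := by
    have hs0 : (0:ℝ) < (S.card:ℝ) := by
      have : (0:ℕ) < S.card := by omega
      exact_mod_cast this
    rw [le_div_iff₀ hs0] at hqre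
    have : ((S.card * q + S.card : ℕ):ℝ) ≤ ((n + 1 : ℕ):ℝ) := by
      push_cast
      linarith [hqre]
    exact_mod_cast this
  -- E6 : the coalition is large enough
  have hCK : ∑ x ∈ S.erase c, Cf x ≤ K := by
    have e1 : (∑ x ∈ S.erase c, Cf x) + (∑ x ∈ S.erase c, score π₀ x S)
        = (S.erase c).card * q + (S.erase c).card := by
      rw [← Finset.sum_add_distrib, Finset.sum_congr rfl hCfD, Finset.sum_const,
        smul_eq_mul, Nat.mul_add, Nat.mul_one]
    have hcardSe : (S.erase c).card + 1 = S.card := by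
      rw [Finset.card_erase_of_mem hcS]; omega
    have e3 : (S.erase c).card * q + q + (S.erase c).card + 1 ≤ n + 1 := by
      have hexp : S.card * q + S.card = (S.erase c).card * q + q + (S.erase c).card + 1 := by
        rw [← hcardSe]; ring
      rw [hexp] at hsq
      exact hsq
    linarith [e1, hsumD, hKn, e3]
  have hAK : ∑ y ∈ S.erase c, A y = K := by
    rw [Finset.sum_congr rfl (fun y _ => hA y), Finset.sum_add_distrib]
    have h1 : ∑ y ∈ S.erase c, (if y = a then L else 0) = L := by
      simp [haSe]
    rw [h1, hLdef]
    omega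
  -- numVoters π' = n
  have hn' : numVoters π' = n := by
    have h1 : ∑ r ∈ ManipAux.CLast c, π' r = K := by
      rw [key_alloc _ (Finset.Subset.refl _),
        Finset.sum_congr rfl (fun y _ => if_pos (ManipAux.rho_mem_clast hm0))]
      exact hAK
    have h2 : ∑ r ∈ Finset.univ \ ManipAux.CLast c, π' r
        = ∑ r ∈ Finset.univ \ ManipAux.CLast c, π r :=
      Finset.sum_congr rfl fun r hr => by rw [hπ' r, if_neg (Finset.mem_sdiff.mp hr).2]
    have h3 := hsplit π'
    have h4 := hsplit π
    rw [h1, h2] at h3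
    rw [hπn, ← hKdef] at h4
    omega
  -- decomposition of the new scores
  have hdecomp : ∀ (U : Finset (Fin m)), S ⊆ U → ∀ x ∈ U, x ≠ c →
      score π' x U = score π₀ x U + (if x ∈ S.erase c then A x else 0) := by
    intro U hSU x hxU hxc
    rw [ManipAux.score_eq,
      ← Finset.sum_inter_add_sum_sdiff (ManipAux.Tops x U) (ManipAux.CLast c) π']
    have h2 : ∑ r ∈ ManipAux.Tops x U \ ManipAux.CLast c, π' r = score π₀ x U := by
      rw [hD_sum]
      exact Finset.sum_congr rfl fun r hr => by rw [hπ' r, if_neg (Finset.mem_sdiff.mp hr).2]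
    have h1 : ∑ r ∈ ManipAux.Tops x U ∩ ManipAux.CLast c, π' r
        = (if x ∈ S.erase c then A x else 0) := by
      rw [key_alloc _ Finset.inter_subset_right]
      by_cases hxSe : x ∈ S.erase c
      · rw [if_pos hxSe]
        rw [Finset.sum_eq_single_of_mem x hxSe (fun y hy hyx => if_neg (fun hmem =>
          hrho_not y x U (hSU (Finset.mem_of_mem_erase hy)) hyx
            (Finset.mem_erase.mp hy).1 (Finset.mem_inter.mp hmem).1))]
        exact if_pos (Finset.mem_inter.mpr
          ⟨ManipAux.rho_mem_tops hm0 hm hxc U, ManipAux.rho_mem_clast hm0⟩)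
      · rw [if_neg hxSe]
        exact Finset.sum_eq_zero fun y hy => if_neg (fun hmem =>
          hrho_not y x U (hSU (Finset.mem_of_mem_erase hy)) (fun h => hxSe (h ▸ hy))
            (Finset.mem_erase.mp hy).1 (Finset.mem_inter.mp hmem).1)
    rw [h1, h2, Nat.add_comm]
  -- at the bottleneck set, c is strictly minimal
  have hstepS : ∀ x ∈ S, x ≠ c → score π' c S < score π' x S := by
    intro x hxS hxc
    have hxSe : x ∈ S.erase c := Finset.mem_erase.mpr ⟨hxc, hxS⟩
    rw [hscoreπ'c S (Finset.Subset.refl S), ← hqdef,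
      hdecomp S (Finset.Subset.refl S) x hxS hxc, if_pos hxSe, hA x]
    have := hCfD x hxSe
    omega
  -- on bigger sets, outsiders are strictly below every member of S
  have hkey : ∀ U : Finset (Fin m), S ⊆ U → ∀ t ∈ U, t ∉ S → ∀ w ∈ S,
      score π' t U < score π' w U := by
    intro U hSU t htU htS w hwS
    have htc : t ≠ c := fun h => htS (h ▸ hcS)
    have htSe : t ∉ S.erase c := fun h => htS (Finset.mem_of_mem_erase h)
    have hst : score π' t U = score π₀ t U := by
      rw [hdecomp U hSU t htU htc, if_neg htSe]
      omega
    obtain ⟨hMt1, hdMt, hNtm⟩ := hcards t U htc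
    have hub_t : ((score π₀ t U : ℕ):ℝ)
        ≤ ((ManipAux.Tops t U \ ManipAux.CLast c).card : ℝ) * (μ + ε) := by
      rw [hD_sum]; exact hub _
    have hdMt' : ((ManipAux.Tops t U \ ManipAux.CLast c).card : ℝ)
        + ((ManipAux.Tops t U ∩ ManipAux.CLast c).card : ℝ)
        = ((ManipAux.Tops t U).card : ℝ) := by exact_mod_cast hdMt
    have hMt1' : (1:ℝ) ≤ ((ManipAux.Tops t U ∩ ManipAux.CLast c).card : ℝ) := by
      exact_mod_cast hMt1
    have hNtm' : ((ManipAux.Tops t U).card : ℝ) ≤ (m.factorial : ℝ) := by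
      exact_mod_cast hNtm
    rcases eq_or_ne w c with hwc | hwc
    · -- w = c
      subst hwc
      have hsw : score π' c U = score π c U := hscoreπ'c U hSU
      have hNc : (ManipAux.Tops c U).card = (ManipAux.Tops t U).card :=
        ManipAux.card_tops_eq U (hSU hwS) htU
      have hlb_c : ((ManipAux.Tops t U).card : ℝ) * (μ - ε) ≤ ((score π c U : ℕ):ℝ) := by
        rw [ManipAux.score_eq, ← hNc]
        exact hlb _
      have hreal : ((score π₀ t U : ℕ):ℝ) < ((score π c U : ℕ):ℝ) := by
        nlinarith [hub_t, hlb_c, hdMt', hMt1', hNtm', hε0, hμ0, hμε,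
          mul_nonneg hε0 (by linarith : (0:ℝ) ≤ (m.factorial:ℝ))]
      rw [hst, hsw]
      exact_mod_cast hreal
    · -- w ∈ S \ {c}
      have hwSe : w ∈ S.erase c := Finset.mem_erase.mpr ⟨hwc, hwS⟩
      have hsw : score π' w U = score π₀ w U + A w := by
        rw [hdecomp U hSU w (hSU hwS) hwc, if_pos hwSe]
      have hNw : (ManipAux.Tops w U).card = (ManipAux.Tops t U).card :=
        ManipAux.card_tops_eq U (hSU hwS) htU
      have hMw : (ManipAux.Tops w U ∩ ManipAux.CLast c).card
          = (ManipAux.Tops t U ∩ ManipAux.CLast c).card :=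
        ManipAux.card_tops_inter_clast_eq U (hSU hwS) htU hwc htc
      have hdw : (ManipAux.Tops w U \ ManipAux.CLast c).card
          = (ManipAux.Tops t U \ ManipAux.CLast c).card := by
        have h := Finset.card_sdiff_add_card_inter (ManipAux.Tops w U) (ManipAux.CLast c)
        rw [hNw, hMw] at h
        omega
      have hlb_w : ((ManipAux.Tops t U \ ManipAux.CLast c).card : ℝ) * (μ - ε)
          ≤ ((score π₀ w U : ℕ):ℝ) := by
        rw [hD_sum, ← hdw]
        exact hlb _
      have hClb := hCflb w hwSe
      have hAw : Cf w ≤ A w := by rw [hA w]; omega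
      have hAw' : (Cf w : ℝ) ≤ (A w : ℝ) := by exact_mod_cast hAw
      have hreal : ((score π₀ t U : ℕ):ℝ) < ((score π₀ w U : ℕ):ℝ) + ((A w : ℕ):ℝ) := by
        nlinarith [hub_t, hlb_w, hClb, hAw', hdMt', hMt1', hNtm', hε0, hμ0, hμε,
          mul_nonneg hε0 (by linarith : (0:ℝ) ≤ (m.factorial:ℝ))]
      rw [hst, hsw]
      exact_mod_cast hreal
  -- run the IRV dynamics
  have hwin : irvAux tb π' Finset.univ ∈ S.erase c :=
    ManipAux.irv_ind htb π' S c hcS hs2 hstepS hkey Finset.univ (Finset.subset_univ S)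
  have hwc : irv tb π' ≠ c := by
    intro h
    rw [irv] at h
    rw [h] at hwin
    exact Finset.notMem_erase c S hwin
  refine ⟨π', ?_, ?_, ?_⟩
  · intro h
    rw [h] at hwc
    exact hwc hcdef.symm
  · rw [hn', hπn]
  · intro r hr
    have hrCL : r ∈ ManipAux.CLast c := by
      by_contra hcl
      rw [hπ' r, if_neg hcl] at hr
      exact lt_irrefl _ hr
    have h := ManipAux.mem_clast.mp hrCL (irv tb π') hwc
    rwa [hcdef] at h
end

section
/- If a profile with n voters and m ≥ 2 candidates admits a Super Condorcet Winner c, then c is the winner of Instant-Runoff Voting on that profile, for every tie-breaking rule. -/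
open Finset

lemma sum_score_eq {m : ℕ} (π : Profile m) (S : Finset (Fin m)) (hS : S.Nonempty) :
    ∑ b ∈ S, score π b S = numVoters π := by
  unfold score numVoters
  simp_rw [Finset.sum_filter]
  rw [Finset.sum_comm]
  refine Finset.sum_congr rfl fun r _ => ?_
  obtain ⟨b₀, hb₀S, hb₀⟩ := S.exists_min_image r hS
  rw [Finset.sum_eq_single_of_mem b₀ hb₀S]
  · rw [if_pos]
    intro a haS hne
    exact lt_of_le_of_ne (hb₀ a haS) (fun h => hne (r.injective h).symm)
  · intro b hbS hne
    rw [if_neg]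
    intro h
    have h1 : r b < r b₀ := h b₀ hb₀S (Ne.symm hne)
    have h2 : r b₀ < r b :=
      lt_of_le_of_ne (hb₀ b hbS) (fun h' => hne (r.injective h').symm)
    exact absurd h1 (not_lt.mpr h2.le)

/-- If a profile with `m ≥ 2` candidates admits a Super Condorcet
Winner `c`, then `c` is the IRV winner of that profile, for every tie-breaking rule. -/
theorem scw_wins_irv (m : ℕ) (hm : 2 ≤ m) (tb : Finset (Fin m) → Fin m)
    (htb : IsTieBreak tb) (π : Profile m) (c : Fin m) (hc : IsSCW π c) :
    irv tb π = c := by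
  have key : ∀ n S, S.card = n → c ∈ S → irvAux tb π S = c := by
    intro n
    induction n using Nat.strong_induction_on with
    | _ n ih =>
      intro S hcard hcS
      rw [irvAux]
      by_cases h1 : S.card ≤ 1
      · rw [if_pos h1]
        have hSc : S = {c} := by
          have h2 := Finset.card_le_one.mp h1
          exact Finset.eq_singleton_iff_unique_mem.mpr ⟨hcS, fun x hx => h2 x hx c hcS⟩
        rw [hSc]
        exact Finset.mem_singleton.mp (htb {c} (Finset.singleton_nonempty c))
      · rw [if_neg h1]
        have hS2 : 2 ≤ S.card := by omega
        have hSpos : 0 < S.card := by omega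
        set M := S.filter fun c' => ∀ b ∈ S, score π c' S ≤ score π b S with hM
        obtain ⟨b₀, hb₀S, hmin⟩ := S.exists_min_image (fun b => score π b S) ⟨c, hcS⟩
        have hMne : M.Nonempty := ⟨b₀, Finset.mem_filter.mpr ⟨hb₀S, hmin⟩⟩
        have heM : tb M ∈ M := htb M hMne
        have heS : tb M ∈ S := (Finset.mem_filter.mp heM).1
        have hec : tb M ≠ c := by
          intro hec
          have hcmin : ∀ b ∈ S, score π c S ≤ score π b S := by
            rw [hec] at heM; exact (Finset.mem_filter.mp heM).2
          have hsum : S.card • score π c S ≤ ∑ b ∈ S, score π b S :=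
            Finset.card_nsmul_le_sum S _ _ hcmin
          rw [sum_score_eq π S ⟨c, hcS⟩] at hsum
          have hlt := hc S hcS hS2
          rw [div_lt_iff₀ (by exact_mod_cast hSpos)] at hlt
          have h3 : (score π c S : ℝ) * S.card ≤ numVoters π := by
            rw [smul_eq_mul, mul_comm] at hsum
            exact_mod_cast hsum
          linarith
        show (if _ : tb M ∈ S then irvAux tb π (S.erase (tb M)) else tb S) = c
        rw [dif_pos heS]
        exact ih (S.erase (tb M)).card (by rw [← hcard]; exact Finset.card_erase_lt_of_mem heS)
          _ rfl (Finset.mem_erase.mpr ⟨Ne.symm hec, hcS⟩)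
  exact key _ Finset.univ rfl (Finset.mem_univ c)
end

section
/- For every integer m ≥ 2, the matrix H indexed by the nonempty subsets of [m−1], with entries H_{S,T} = 1/(|S∪T|+1) − 1/((|S|+1)(|T|+1)) for nonempty S, T ⊆ [m−1], is symmetric positive definite. -/
/-!
`subsetWeight` is the law of a random subset `A` of `[n]` whose size is uniform on `{0, …, n}`
and which is uniform given its size; under it `P(U ⊆ A) = 1/(|U|+1)`. Hence `H_{S,T}` is the
covariance of the indicators of `S ⊆ A` and `T ⊆ A`, and `xᵀHx` is the variance of
`g(A) = ∑_{S ⊆ A} x_S`. As every subset has positive weight, this vanishes only if `g` is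
constant; but `g(∅) = 0` while `g(S) = x_S` for `S` of minimal size with `x_S ≠ 0`.
-/

open Finset Matrix

/-- The nonempty subsets of `[m−1] = {1, …, m−1}`; there are `2^(m−1) − 1` of them. -/
abbrev NESubset (m : ℕ) := {S : Finset (Fin (m - 1)) // S.Nonempty}

section Covariance

variable {ι Ω : Type*} [Fintype Ω] (w : Ω → ℝ) (f : ι → Ω → ℝ)

def covarianceMatrix : Matrix ι ι ℝ :=
  of fun i j => ∑ ω, w ω * (f i ω * f j ω) - (∑ ω, w ω * f i ω) * ∑ ω, w ω * f j ω

lemma covarianceMatrix_isSymm : (covarianceMatrix w f).IsSymm := by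
  ext i j
  simp only [covarianceMatrix, transpose_apply, of_apply, mul_comm (f i _),
    mul_comm (∑ ω, w ω * f i ω)]

variable {w}

lemma sum_mul_sub_sq_eq (hw : ∑ ω, w ω = 1) (g : Ω → ℝ) :
    ∑ ω, w ω * (g ω - ∑ ω', w ω' * g ω') ^ 2 = ∑ ω, w ω * g ω ^ 2 - (∑ ω, w ω * g ω) ^ 2 := by
  set μ := ∑ ω', w ω' * g ω'
  calc ∑ ω, w ω * (g ω - μ) ^ 2
      = ∑ ω, w ω * g ω ^ 2 - 2 * μ * ∑ ω, w ω * g ω + μ ^ 2 * ∑ ω, w ω := by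
        simp only [mul_sum, ← sum_sub_distrib, ← sum_add_distrib]
        exact sum_congr rfl fun ω _ => by ring
    _ = ∑ ω, w ω * g ω ^ 2 - μ ^ 2 := by rw [hw]; ring

lemma dotProduct_covarianceMatrix_mulVec [Fintype ι] (hw : ∑ ω, w ω = 1) (x : ι → ℝ) :
    x ⬝ᵥ (covarianceMatrix w f *ᵥ x)
      = ∑ ω, w ω * (∑ i, x i * f i ω - ∑ ω', w ω' * ∑ i, x i * f i ω') ^ 2 := by
  have hquad : x ⬝ᵥ (covarianceMatrix w f *ᵥ x)
      = ∑ i, ∑ j, x i * x j * covarianceMatrix w f i j := by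
    simp only [dotProduct, mulVec, mul_sum]
    exact sum_congr rfl fun i _ => sum_congr rfl fun j _ => by ring
  have hsecond : ∑ ω, w ω * (∑ i, x i * f i ω) ^ 2
      = ∑ i, ∑ j, x i * x j * ∑ ω, w ω * (f i ω * f j ω) := by
    simp_rw [sq, sum_mul_sum, mul_sum]
    rw [sum_comm]
    refine sum_congr rfl fun i _ => ?_
    rw [sum_comm]
    exact sum_congr rfl fun j _ => sum_congr rfl fun ω _ => by ring
  have hfirst : (∑ ω, w ω * ∑ i, x i * f i ω) ^ 2
      = ∑ i, ∑ j, x i * x j * ((∑ ω, w ω * f i ω) * ∑ ω, w ω * f j ω) := by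
    have : ∑ ω, w ω * ∑ i, x i * f i ω = ∑ i, x i * ∑ ω, w ω * f i ω := by
      simp only [mul_sum]
      rw [sum_comm]
      exact sum_congr rfl fun i _ => sum_congr rfl fun ω _ => by ring
    rw [this, sq, sum_mul_sum]
    exact sum_congr rfl fun i _ => sum_congr rfl fun j _ => by ring
  rw [sum_mul_sub_sq_eq hw, hquad, hsecond, hfirst, ← sum_sub_distrib]
  simp only [covarianceMatrix, of_apply, mul_sub, sum_sub_distrib]

lemma covarianceMatrix_posDef [Fintype ι] (hw : ∀ ω, 0 < w ω) (hw1 : ∑ ω, w ω = 1)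
    (hf : ∀ x : ι → ℝ, x ≠ 0 → ∃ ω ω', ∑ i, x i * f i ω ≠ ∑ i, x i * f i ω') :
    (covarianceMatrix w f).PosDef := by
  refine .of_dotProduct_mulVec_pos (isHermitian_iff_isSymm.2 (covarianceMatrix_isSymm w f))
    fun x hx => ?_
  rw [star_trivial, dotProduct_covarianceMatrix_mulVec f hw1]
  obtain ⟨ω₁, ω₂, hne⟩ := hf x hx
  set μ := ∑ ω', w ω' * ∑ i, x i * f i ω'
  obtain ⟨ω, hω⟩ : ∃ ω, ∑ i, x i * f i ω ≠ μ := by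
    by_contra! h
    exact hne ((h ω₁).trans (h ω₂).symm)
  exact sum_pos' (fun ω _ => by have := hw ω; positivity)
    ⟨ω, mem_univ _, mul_pos (hw ω) (sq_pos_iff.2 (sub_ne_zero.2 hω))⟩

end Covariance

lemma sum_choose_smul_inv_choose (u k : ℕ) :
    ∑ j ∈ range (k + 1), k.choose j • ((((u + k : ℕ) : ℝ) + 1) * (u + k).choose (u + j))⁻¹
      = ((u : ℝ) + 1)⁻¹ := by
  set n := u + k
  have hterm : ∀ j ∈ range (k + 1), k.choose j • (((n : ℝ) + 1) * n.choose (u + j))⁻¹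
      = ((j + u).choose u : ℝ) * (((n : ℝ) + 1) * n.choose u)⁻¹ := by
    intro j hj
    have hjk : j ≤ k := Nat.lt_succ_iff.1 (mem_range.1 hj)
    have hchoose : (n.choose (u + j) : ℝ) * (u + j).choose u = n.choose u * k.choose j := by
      have := Nat.choose_mul (n := n) (k := u + j) (s := u) (Nat.le_add_right u j)
      rw [Nat.add_sub_cancel_left, Nat.add_sub_cancel_left] at this
      exact_mod_cast this
    have h1 : (0 : ℝ) < n.choose (u + j) := by exact_mod_cast Nat.choose_pos (by omega)
    have h2 : (0 : ℝ) < n.choose u := by exact_mod_cast Nat.choose_pos (by omega)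
    rw [nsmul_eq_mul, add_comm j u]
    field_simp
    linear_combination -hchoose
  have hhockey : ∑ j ∈ range (k + 1), ((j + u).choose u : ℝ) = (n + 1).choose (u + 1) := by
    rw [show n + 1 = k + u + 1 by omega]
    exact_mod_cast Nat.sum_range_add_choose k u
  have hpascal : ((n : ℝ) + 1) * n.choose u = (n + 1).choose (u + 1) * ((u : ℝ) + 1) := by
    exact_mod_cast Nat.add_one_mul_choose_eq n u
  have hpos : (0 : ℝ) < (n + 1).choose (u + 1) := by exact_mod_cast Nat.choose_pos (by omega)
  rw [sum_congr rfl hterm, ← sum_mul, hhockey, hpascal, mul_inv, ← mul_assoc,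
    mul_inv_cancel₀ hpos.ne', one_mul]

section SubsetWeight

variable {α : Type*} [Fintype α] [DecidableEq α]

lemma sum_superset_apply_card {M : Type*} [AddCommMonoid M] (U : Finset α) (g : ℕ → M) :
    ∑ A with U ⊆ A, g #A
      = ∑ j ∈ range (Fintype.card α - #U + 1), (Fintype.card α - #U).choose j • g (#U + j) := by
  have hIcc : ({A | U ⊆ A} : Finset (Finset α)) = Icc U univ := by ext; simp
  have hdisj : ∀ B ∈ Uᶜ.powerset, Disjoint U B := fun B hB =>
    disjoint_of_subset_right (mem_powerset.1 hB) disjoint_compl_right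
  rw [hIcc, Icc_eq_image_powerset (subset_univ U), ← compl_eq_univ_sdiff, ← card_compl,
    ← sum_powerset_apply_card, sum_image]
  · exact sum_congr rfl fun B hB => by rw [card_union_of_disjoint (hdisj B hB)]
  · intro B hB B' hB' h
    rw [← union_sdiff_cancel_left (hdisj B hB), ← union_sdiff_cancel_left (hdisj B' hB')]
    exact congrArg (· \ U) h

variable (α) in
noncomputable def subsetWeight (A : Finset α) : ℝ :=
  (((Fintype.card α : ℝ) + 1) * (Fintype.card α).choose #A)⁻¹

omit [DecidableEq α] in
lemma subsetWeight_pos (A : Finset α) : 0 < subsetWeight α A := by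
  have := Nat.choose_pos (card_le_univ A)
  unfold subsetWeight
  positivity

lemma sum_subsetWeight_superset (U : Finset α) :
    ∑ A with U ⊆ A, subsetWeight α A = ((#U : ℝ) + 1)⁻¹ := by
  obtain ⟨k, hk⟩ := Nat.exists_eq_add_of_le (card_le_univ U)
  calc ∑ A with U ⊆ A, subsetWeight α A
      = ∑ j ∈ range (Fintype.card α - #U + 1), (Fintype.card α - #U).choose j •
          (((Fintype.card α : ℝ) + 1) * (Fintype.card α).choose (#U + j))⁻¹ :=
        sum_superset_apply_card U fun j =>
          (((Fintype.card α : ℝ) + 1) * (Fintype.card α).choose j)⁻¹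
    _ = ((#U : ℝ) + 1)⁻¹ := by rw [hk, Nat.add_sub_cancel_left, sum_choose_smul_inv_choose]

lemma sum_subsetWeight : ∑ A, subsetWeight α A = 1 := by
  simpa using sum_subsetWeight_superset (∅ : Finset α)

lemma covarianceMatrix_superset {ι : Type*} (s : ι → Finset α) :
    covarianceMatrix (subsetWeight α) (fun i A => if s i ⊆ A then 1 else 0)
      = of fun i j =>
          1 / ((#(s i ∪ s j) : ℝ) + 1) - 1 / (((#(s i) : ℝ) + 1) * ((#(s j) : ℝ) + 1)) := by
  ext i j
  simp_rw [covarianceMatrix, of_apply, ite_zero_mul_ite_zero, ← union_subset_iff, mul_one,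
    mul_ite, mul_one, mul_zero, ← sum_filter, sum_subsetWeight_superset, one_div, mul_inv]

lemma exists_sum_superset_ne (x : {S : Finset α // S.Nonempty} → ℝ) (hx : x ≠ 0) :
    ∃ A B : Finset α, ∑ S, x S * (if S.1 ⊆ A then 1 else 0)
      ≠ ∑ S, x S * (if S.1 ⊆ B then 1 else 0) := by
  obtain ⟨S₁, hS₁⟩ := Function.ne_iff.1 hx
  obtain ⟨S₀, hS₀, hmin⟩ := exists_min_image {S | x S ≠ 0} (fun S => #S.1)
    (filter_nonempty_iff.2 ⟨S₁, mem_univ S₁, hS₁⟩)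
  refine ⟨S₀.1, ∅, ?_⟩
  have hempty : ∑ S, x S * (if S.1 ⊆ ∅ then 1 else 0) = 0 :=
    sum_eq_zero fun S _ => by simp [S.2.ne_empty]
  rw [hempty, sum_eq_single S₀]
  · simpa using (mem_filter.1 hS₀).2
  · intro S _ hS
    by_cases hsub : S.1 ⊆ S₀.1
    · have hlt : #S.1 < #S₀.1 :=
        card_lt_card (ssubset_of_subset_of_ne hsub (Subtype.val_injective.ne hS))
      have hxS : x S = 0 := by
        by_contra h
        exact hlt.not_ge (hmin S (mem_filter.2 ⟨mem_univ S, h⟩))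
      simp [hxS]
    · simp [hsub]
  · simp

end SubsetWeight

theorem H_posdef_general (m : ℕ) :
    let H : Matrix (NESubset m) (NESubset m) ℝ :=
      Matrix.of fun S T =>
        1 / (((S.1 ∪ T.1).card : ℝ) + 1) -
          1 / (((S.1.card : ℝ) + 1) * ((T.1.card : ℝ) + 1))
    H.IsSymm ∧ H.PosDef := by
  intro H
  rw [show H = _ from (covarianceMatrix_superset Subtype.val).symm]
  exact ⟨covarianceMatrix_isSymm _ _,
    covarianceMatrix_posDef _ subsetWeight_pos sum_subsetWeight exists_sum_superset_ne⟩

/-- For every `m ≥ 2`, the matrix `H` indexed by the nonempty subsets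
of `[m−1]`, with entries `H_{S,T} = 1/(|S∪T|+1) − 1/((|S|+1)(|T|+1))`, is symmetric
positive definite. -/
theorem H_posdef (m : ℕ) (hm : 2 ≤ m) :
    let H : Matrix (NESubset m) (NESubset m) ℝ :=
      Matrix.of fun S T =>
        1 / (((S.1 ∪ T.1).card : ℝ) + 1) -
          1 / (((S.1.card : ℝ) + 1) * ((T.1.card : ℝ) + 1))
    H.IsSymm ∧ H.PosDef :=
  H_posdef_general m
end
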